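/- arXiv:2307.06394 — 13 statements merged into one kernel-verified Lean document; each statement's English description precedes it below -/
import Mathlib

section
/- Let ξ₁, ξ₂, ξ₃ be a Frenet-type frame with curvatures K₁, K₂ where (K₁, K₂) ≠ (0,0) pointwise and K₁² + K₂² > 0. If there exists a constant unit vector d and a constant angle θ with ⟨ξ₂(s), d⟩ = cos θ for all s, then the function σ(s) = (K₁² / (K₁² + K₂²)^{3/2}) · (K₂/K₁)' is constant (equal to ± cot θ). -/
open Real

local notation "E3" => EuclideanSpace ℝ (Fin 3)

open RealInnerProductSpace in
private lemma parseval3 (u v w d : E3) (hu : ‖u‖ = 1) (hv : ‖v‖ = 1) (hw : ‖w‖ = 1)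
    (huv : ⟪u, v⟫ = 0) (huw : ⟪u, w⟫ = 0) (hvw : ⟪v, w⟫ = 0) (hd : ‖d‖ = 1) :
    ⟪u, d⟫ ^ 2 + ⟪v, d⟫ ^ 2 + ⟪w, d⟫ ^ 2 = 1 := by
  set f : Fin 3 → E3 := ![u, v, w] with hf
  have horth : Orthonormal ℝ f := by
    constructor
    · intro i
      fin_cases i <;> simp only [hf, Matrix.cons_val_zero, Matrix.cons_val_one,
        Matrix.head_cons, Matrix.cons_val_two, Matrix.tail_cons] <;> assumption
    · intro i j hij
      fin_cases i <;> fin_cases j <;>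
        simp only [hf, Matrix.cons_val_zero, Matrix.cons_val_one, Matrix.head_cons,
          Matrix.cons_val_two, Matrix.tail_cons] <;>
        first
          | exact absurd rfl hij
          | assumption
          | (rw [real_inner_comm]; assumption)
  have hcard : Fintype.card (Fin 3) = Module.finrank ℝ E3 := by
    simp [finrank_euclideanSpace]
  let B := basisOfLinearIndependentOfCardEqFinrank horth.linearIndependent hcard
  have hB : ⇑B = f := coe_basisOfLinearIndependentOfCardEqFinrank _ _
  have horthB : Orthonormal ℝ B := by rwa [hB]
  let OB := B.toOrthonormalBasis horthB
  have hOB : ⇑OB = f := by rw [B.coe_toOrthonormalBasis horthB, hB]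
  have hsum := OB.sum_inner_mul_inner d d
  rw [real_inner_self_eq_norm_sq, hd, Fin.sum_univ_three, hOB] at hsum
  simp only [hf, Matrix.cons_val_zero, Matrix.cons_val_one, Matrix.head_cons,
    Matrix.cons_val_two, Matrix.tail_cons] at hsum
  have c1 : ⟪d, u⟫ = ⟪u, d⟫ := real_inner_comm u d
  have c2 : ⟪d, v⟫ = ⟪v, d⟫ := real_inner_comm v d
  have c3 : ⟪d, w⟫ = ⟪w, d⟫ := real_inner_comm w d
  rw [c1, c2, c3] at hsum
  nlinarith [hsum]


/-- If `ξ₂` of a Frenet-type frame makes a constant angle `θ` with a fixed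
unit vector `d` (slant helix), then `σ = (K₁²/(K₁²+K₂²)^{3/2})·(K₂/K₁)'` is constant,
equal to `± cot θ`. -/
theorem slant_helix_sigma_const
    (ξ₁ ξ₂ ξ₃ : ℝ → E3) (K₁ K₂ : ℝ → ℝ)
    (hξ₁ : ContDiff ℝ (⊤ : ℕ∞) ξ₁) (hξ₂ : ContDiff ℝ (⊤ : ℕ∞) ξ₂) (hξ₃ : ContDiff ℝ (⊤ : ℕ∞) ξ₃)
    (hK₁ : ContDiff ℝ (⊤ : ℕ∞) K₁) (hK₂ : ContDiff ℝ (⊤ : ℕ∞) K₂)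
    (hK₁pos : ∀ s, 0 < K₁ s) (hKpos : ∀ s, 0 < (K₁ s) ^ 2 + (K₂ s) ^ 2)
    (hn₁ : ∀ s, ‖ξ₁ s‖ = 1) (hn₂ : ∀ s, ‖ξ₂ s‖ = 1) (hn₃ : ∀ s, ‖ξ₃ s‖ = 1)
    (ho₁₂ : ∀ s, (inner ℝ (ξ₁ s) (ξ₂ s) : ℝ) = 0)
    (ho₁₃ : ∀ s, (inner ℝ (ξ₁ s) (ξ₃ s) : ℝ) = 0)
    (ho₂₃ : ∀ s, (inner ℝ (ξ₂ s) (ξ₃ s) : ℝ) = 0)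
    (hd₁ : ∀ s, HasDerivAt ξ₁ (K₁ s • ξ₂ s) s)
    (hd₂ : ∀ s, HasDerivAt ξ₂ (-(K₁ s) • ξ₁ s + K₂ s • ξ₃ s) s)
    (hd₃ : ∀ s, HasDerivAt ξ₃ (-(K₂ s) • ξ₂ s) s)
    (d : E3) (hdunit : ‖d‖ = 1) (θ : ℝ)
    (hangle : ∀ s, (inner ℝ (ξ₂ s) d : ℝ) = Real.cos θ) :
    ∃ c : ℝ, (c = Real.cos θ / Real.sin θ ∨ c = -(Real.cos θ / Real.sin θ)) ∧
      ∀ s, (K₁ s) ^ 2 / (Real.sqrt ((K₁ s) ^ 2 + (K₂ s) ^ 2)) ^ 3 *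
              deriv (fun t => K₂ t / K₁ t) s = c := by
  have hKne : ∀ s, K₁ s ≠ 0 := fun s => (hK₁pos s).ne'
  set a : ℝ → ℝ := fun s => (inner ℝ (ξ₁ s) d : ℝ) with ha_def
  set b : ℝ → ℝ := fun s => (inner ℝ (ξ₃ s) d : ℝ) with hb_def
  have ha' : ∀ s, HasDerivAt a (K₁ s * Real.cos θ) s := by
    intro s
    have h := (hd₁ s).inner ℝ (hasDerivAt_const s d)
    rw [inner_zero_right, zero_add, real_inner_smul_left, hangle s] at h
    exact h
  have hb' : ∀ s, HasDerivAt b (-(K₂ s) * Real.cos θ) s := by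
    intro s
    have h := (hd₃ s).inner ℝ (hasDerivAt_const s d)
    rw [inner_zero_right, zero_add, real_inner_smul_left, hangle s] at h
    exact h
  have h0 : ∀ s, K₁ s * a s = K₂ s * b s := by
    intro s
    have h1 := (hd₂ s).inner ℝ (hasDerivAt_const s d)
    rw [inner_zero_right, zero_add, inner_add_left, real_inner_smul_left,
      real_inner_smul_left] at h1
    have h2 : HasDerivAt (fun t => (inner ℝ (ξ₂ t) d : ℝ)) 0 s :=
      (hasDerivAt_const s (Real.cos θ)).congr_of_eventuallyEq
        (Filter.Eventually.of_forall fun t => hangle t)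
    have h3 := h1.unique h2
    have hha : (inner ℝ (ξ₁ s) d : ℝ) = a s := rfl
    have hhb : (inner ℝ (ξ₃ s) d : ℝ) = b s := rfl
    rw [hha, hhb] at h3
    linarith
  have hsq : ∀ s, a s ^ 2 + b s ^ 2 = Real.sin θ ^ 2 := by
    intro s
    have hp := parseval3 (ξ₁ s) (ξ₂ s) (ξ₃ s) d (hn₁ s) (hn₂ s) (hn₃ s)
      (ho₁₂ s) (ho₁₃ s) (ho₂₃ s) hdunit
    rw [hangle s] at hp
    have ht := Real.sin_sq_add_cos_sq θ
    have hha : (inner ℝ (ξ₁ s) d : ℝ) = a s := rfl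
    have hhb : (inner ℝ (ξ₃ s) d : ℝ) = b s := rfl
    rw [hha, hhb] at hp
    linarith
  have hsin : Real.sin θ ≠ 0 := by
    intro h
    have haz : ∀ s, a s = 0 := by
      intro s
      have h1 := hsq s
      rw [h] at h1
      nlinarith [sq_nonneg (a s), sq_nonneg (b s)]
    have h1 : HasDerivAt a 0 0 :=
      (hasDerivAt_const (0 : ℝ) (0 : ℝ)).congr_of_eventuallyEq
        (Filter.Eventually.of_forall fun t => haz t)
    have h2 := (ha' 0).unique h1
    have hc : Real.cos θ = 0 := by
      rcases mul_eq_zero.1 h2 with h' | h'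
      · exact absurd h' (hKne 0)
      · exact h'
    have h3 := Real.sin_sq_add_cos_sq θ
    rw [h, hc] at h3
    norm_num at h3
  set lam : ℝ → ℝ := fun s => b s / K₁ s with hlam_def
  have hbl : ∀ s, b s = lam s * K₁ s := fun s =>
    (div_mul_cancel₀ (b s) (hKne s)).symm
  have hal : ∀ s, a s = lam s * K₂ s := by
    intro s
    have h := h0 s
    rw [hbl s] at h
    apply mul_left_cancel₀ (hKne s)
    linear_combination h
  have hlamsq : ∀ s, lam s ^ 2 * ((K₁ s) ^ 2 + (K₂ s) ^ 2) = Real.sin θ ^ 2 := by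
    intro s
    have h := hsq s
    rw [hal s, hbl s] at h
    nlinarith [h]
  have hlamne : ∀ s, lam s ≠ 0 := by
    intro s hz
    have h := hlamsq s
    rw [hz] at h
    exact hsin (by nlinarith [h])
  have hdK₁ : ∀ s, HasDerivAt K₁ (deriv K₁ s) s :=
    fun s => (hK₁.differentiable (by simp) s).hasDerivAt
  have hdK₂ : ∀ s, HasDerivAt K₂ (deriv K₂ s) s :=
    fun s => (hK₂.differentiable (by simp) s).hasDerivAt
  have hlam' : ∀ s, HasDerivAt lam
      ((-(K₂ s) * Real.cos θ * K₁ s - b s * deriv K₁ s) / (K₁ s) ^ 2) s :=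
    fun s => (hb' s).div (hdK₁ s) (hKne s)
  have key : ∀ s, lam s * (deriv K₂ s * K₁ s - K₂ s * deriv K₁ s)
      = ((K₁ s) ^ 2 + (K₂ s) ^ 2) * Real.cos θ := by
    intro s
    have h1 : HasDerivAt (fun t => lam t * K₂ t)
        ((-(K₂ s) * Real.cos θ * K₁ s - b s * deriv K₁ s) / (K₁ s) ^ 2 * K₂ s
          + lam s * deriv K₂ s) s := (hlam' s).mul (hdK₂ s)
    have h2 : HasDerivAt (fun t => lam t * K₂ t) (K₁ s * Real.cos θ) s :=
      (ha' s).congr_of_eventuallyEq (Filter.Eventually.of_forall fun t => (hal t).symm)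
    have heq := h1.unique h2
    rw [hbl s] at heq
    have hK := hKne s
    field_simp at heq
    apply mul_left_cancel₀ hK
    linear_combination K₁ s * heq
  set mu : ℝ → ℝ := fun s => lam s * Real.sqrt ((K₁ s) ^ 2 + (K₂ s) ^ 2) with hmu_def
  have hmusq : ∀ s, mu s ^ 2 = Real.sin θ ^ 2 := by
    intro s
    have : mu s ^ 2 = lam s ^ 2 * ((K₁ s) ^ 2 + (K₂ s) ^ 2) := by
      rw [hmu_def]
      simp only [mul_pow]
      rw [Real.sq_sqrt (hKpos s).le]
    rw [this]
    exact hlamsq s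
  have hrne : ∀ s, Real.sqrt ((K₁ s) ^ 2 + (K₂ s) ^ 2) ≠ 0 :=
    fun s => (Real.sqrt_pos.2 (hKpos s)).ne'
  have hmune : ∀ s, mu s ≠ 0 := fun s => mul_ne_zero (hlamne s) (hrne s)
  have hbcont : Continuous b := (hξ₃.continuous.inner continuous_const)
  have hmucont : Continuous mu := by
    apply Continuous.mul
    · exact hbcont.div hK₁.continuous hKne
    · exact Real.continuous_sqrt.comp
        (((hK₁.continuous.pow 2).add (hK₂.continuous.pow 2)))
  have hmuconst : ∀ s, mu s = mu 0 := by
    intro s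
    by_contra h
    have h1 := hmusq s
    have h0m := hmusq 0
    have hneg : mu s * mu 0 < 0 := by
      have hz : (mu s - mu 0) * (mu s + mu 0) = 0 := by nlinarith
      rcases mul_eq_zero.1 hz with h' | h'
      · exact absurd (by linarith) h
      · have he : mu s = -mu 0 := by linarith
        rw [he]
        have hp : mu 0 ^ 2 > 0 :=
          lt_of_le_of_ne (sq_nonneg _) (Ne.symm (pow_ne_zero 2 (hmune 0)))
        nlinarith
    have hmem : (0 : ℝ) ∈ Set.uIcc (mu 0) (mu s) := by
      rcases mul_neg_iff.1 hneg with ⟨hp, hn⟩ | ⟨hn, hp⟩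
      · exact Set.mem_uIcc.2 (Or.inl ⟨hn.le, hp.le⟩)
      · exact Set.mem_uIcc.2 (Or.inr ⟨hn.le, hp.le⟩)
    obtain ⟨t, _, ht⟩ :=
      intermediate_value_uIcc (hmucont.continuousOn (s := Set.uIcc 0 s)) hmem
    exact hmune t ht
  have sigma_eq : ∀ s, (K₁ s) ^ 2 / (Real.sqrt ((K₁ s) ^ 2 + (K₂ s) ^ 2)) ^ 3 *
      deriv (fun t => K₂ t / K₁ t) s = Real.cos θ / mu s := by
    intro s
    have hder : deriv (fun t => K₂ t / K₁ t) s
        = (deriv K₂ s * K₁ s - K₂ s * deriv K₁ s) / (K₁ s) ^ 2 :=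
      ((hdK₂ s).div (hdK₁ s) (hKne s)).deriv
    rw [hder, hmu_def]
    set r := Real.sqrt ((K₁ s) ^ 2 + (K₂ s) ^ 2) with hr_def
    have hr2 : r ^ 2 = (K₁ s) ^ 2 + (K₂ s) ^ 2 := Real.sq_sqrt (hKpos s).le
    have hrne' : r ≠ 0 := hrne s
    have hK := hKne s
    have hl := hlamne s
    have hk := key s
    have hD : deriv K₂ s * K₁ s - K₂ s * deriv K₁ s = r ^ 2 * Real.cos θ / lam s := by
      rw [hr2]
      field_simp
      linear_combination hk
    rw [hD]
    field_simp
    ring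
  have hmu0 : mu 0 = Real.sin θ ∨ mu 0 = -Real.sin θ := by
    have h := hmusq 0
    have hz : (mu 0 - Real.sin θ) * (mu 0 + Real.sin θ) = 0 := by nlinarith
    rcases mul_eq_zero.1 hz with h' | h'
    · exact Or.inl (by linarith)
    · exact Or.inr (by linarith)
  refine ⟨Real.cos θ / mu 0, ?_, ?_⟩
  · rcases hmu0 with h' | h'
    · exact Or.inl (by rw [h'])
    · exact Or.inr (by rw [h', div_neg])
  · intro s
    rw [sigma_eq s, hmuconst s]
end

section
/- Let ξ₁, ξ₂, ξ₃ be a Frenet-type frame with curvatures K₁ > 0 and K₂, with K₁² + K₂² > 0 everywhere. If the function σ = (K₁² / (K₁² + K₂²)^{3/2}) · (K₂/K₁)' is a constant c, then the vector field d(s) = -sin θ · (K₂/√(K₁²+K₂²)) ξ₁ + cos θ · ξ₂ - sin θ · (K₁/√(K₁²+K₂²)) ξ₃, where θ satisfies cot θ = -c, has vanishing derivative, i.e., d is a constant vector making constant angle θ with ξ₂. -/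
open Real

local notation "E3" => EuclideanSpace ℝ (Fin 3)

/-- If `σ = (K₁²/(K₁²+K₂²)^{3/2})·(K₂/K₁)'` is a constant `c`, then the
field `d = -sin θ (K₂/√(K₁²+K₂²)) ξ₁ + cos θ ξ₂ - sin θ (K₁/√(K₁²+K₂²)) ξ₃`, where
`cot θ = -c`, has vanishing derivative (hence is constant) and makes the constant angle
`θ` with `ξ₂`. -/
theorem sigma_const_gives_slant_helix
    (ξ₁ ξ₂ ξ₃ : ℝ → E3) (K₁ K₂ : ℝ → ℝ)
    (hξ₁ : ContDiff ℝ (⊤ : ℕ∞) ξ₁) (hξ₂ : ContDiff ℝ (⊤ : ℕ∞) ξ₂) (hξ₃ : ContDiff ℝ (⊤ : ℕ∞) ξ₃)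
    (hK₁ : ContDiff ℝ (⊤ : ℕ∞) K₁) (hK₂ : ContDiff ℝ (⊤ : ℕ∞) K₂)
    (hK₁pos : ∀ s, 0 < K₁ s) (hKpos : ∀ s, 0 < (K₁ s) ^ 2 + (K₂ s) ^ 2)
    (hn₁ : ∀ s, ‖ξ₁ s‖ = 1) (hn₂ : ∀ s, ‖ξ₂ s‖ = 1) (hn₃ : ∀ s, ‖ξ₃ s‖ = 1)
    (ho₁₂ : ∀ s, (inner ℝ (ξ₁ s) (ξ₂ s) : ℝ) = 0)
    (ho₁₃ : ∀ s, (inner ℝ (ξ₁ s) (ξ₃ s) : ℝ) = 0)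
    (ho₂₃ : ∀ s, (inner ℝ (ξ₂ s) (ξ₃ s) : ℝ) = 0)
    (hd₁ : ∀ s, HasDerivAt ξ₁ (K₁ s • ξ₂ s) s)
    (hd₂ : ∀ s, HasDerivAt ξ₂ (-(K₁ s) • ξ₁ s + K₂ s • ξ₃ s) s)
    (hd₃ : ∀ s, HasDerivAt ξ₃ (-(K₂ s) • ξ₂ s) s)
    (c θ : ℝ) (hθ : Real.sin θ ≠ 0)
    (hcot : Real.cos θ / Real.sin θ = -c)
    (hσ : ∀ s, (K₁ s) ^ 2 / (Real.sqrt ((K₁ s) ^ 2 + (K₂ s) ^ 2)) ^ 3 *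
              deriv (fun t => K₂ t / K₁ t) s = c)
    (d : ℝ → E3)
    (hd : ∀ s, d s = (-(Real.sin θ) * (K₂ s / Real.sqrt ((K₁ s) ^ 2 + (K₂ s) ^ 2))) • ξ₁ s
        + Real.cos θ • ξ₂ s
        + (-(Real.sin θ) * (K₁ s / Real.sqrt ((K₁ s) ^ 2 + (K₂ s) ^ 2))) • ξ₃ s) :
    (∀ s, HasDerivAt d 0 s) ∧ (∀ s, (inner ℝ (ξ₂ s) (d s) : ℝ) = Real.cos θ) := by

  have hcos : Real.cos θ = -c * Real.sin θ := by
    field_simp at hcot; linarith [hcot]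
  constructor
  · intro s
    have hFd : d = fun t =>
        (-(Real.sin θ) * (K₂ t / Real.sqrt ((K₁ t) ^ 2 + (K₂ t) ^ 2))) • ξ₁ t
        + Real.cos θ • ξ₂ t
        + (-(Real.sin θ) * (K₁ t / Real.sqrt ((K₁ t) ^ 2 + (K₂ t) ^ 2))) • ξ₃ t :=
      funext hd
    rw [hFd]
    set k₁' := deriv K₁ s with hk₁'
    set k₂' := deriv K₂ s with hk₂'
    have hK₁d : HasDerivAt K₁ k₁' s := (hK₁.differentiable (by simp) s).hasDerivAt
    have hK₂d : HasDerivAt K₂ k₂' s := (hK₂.differentiable (by simp) s).hasDerivAt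
    set ω := Real.sqrt ((K₁ s) ^ 2 + (K₂ s) ^ 2) with hωdef
    have hωpos : 0 < ω := Real.sqrt_pos.mpr (hKpos s)
    have hωne : ω ≠ 0 := ne_of_gt hωpos
    have hω2 : ω ^ 2 = (K₁ s) ^ 2 + (K₂ s) ^ 2 := Real.sq_sqrt (hKpos s).le
    have hK₁ne : K₁ s ≠ 0 := ne_of_gt (hK₁pos s)
    have hsum : HasDerivAt (fun t => (K₁ t) ^ 2 + (K₂ t) ^ 2)
        (2 * K₁ s ^ 1 * k₁' + 2 * K₂ s ^ 1 * k₂') s :=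
      (hK₁d.pow 2).add (hK₂d.pow 2)
    have hωd : HasDerivAt (fun t => Real.sqrt ((K₁ t) ^ 2 + (K₂ t) ^ 2))
        ((2 * K₁ s ^ 1 * k₁' + 2 * K₂ s ^ 1 * k₂') / (2 * ω)) s :=
      hsum.sqrt (ne_of_gt (hKpos s))
    -- value of c
    have hderivq : deriv (fun t => K₂ t / K₁ t) s = (k₂' * K₁ s - K₂ s * k₁') / (K₁ s) ^ 2 :=
      (hK₂d.div hK₁d hK₁ne).deriv
    have hc : (k₂' * K₁ s - K₂ s * k₁') = c * ω ^ 3 := by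
      rw [← hσ s, hderivq, ← hωdef]
      field_simp
    have hfd : HasDerivAt (fun t => K₂ t / Real.sqrt ((K₁ t) ^ 2 + (K₂ t) ^ 2))
        (c * K₁ s) s := by
      have h := hK₂d.div hωd hωne
      refine (h.congr_deriv ?_).congr_of_eventuallyEq (Filter.Eventually.of_forall fun _ => rfl)
      symm
      rw [← hωdef]
      field_simp
      linear_combination (-K₁ s)*hc - k₂'*hω2
    have hgd : HasDerivAt (fun t => K₁ t / Real.sqrt ((K₁ t) ^ 2 + (K₂ t) ^ 2))
        (-(c * K₂ s)) s := by
      have h := hK₁d.div hωd hωne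
      refine (h.congr_deriv ?_).congr_of_eventuallyEq (Filter.Eventually.of_forall fun _ => rfl)
      symm
      rw [← hωdef]
      field_simp
      linear_combination (K₂ s)*hc - k₁'*hω2
    have h1 : HasDerivAt (fun t => (-(Real.sin θ) * (K₂ t / Real.sqrt ((K₁ t) ^ 2 + (K₂ t) ^ 2))) • ξ₁ t)
        ((-(Real.sin θ) * (K₂ s / ω)) • (K₁ s • ξ₂ s)
          + (-(Real.sin θ) * (c * K₁ s)) • ξ₁ s) s :=
      ((hfd.const_mul (-(Real.sin θ))).smul (hd₁ s))
    have h2 : HasDerivAt (fun t => Real.cos θ • ξ₂ t)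
        (Real.cos θ • (-(K₁ s) • ξ₁ s + K₂ s • ξ₃ s)) s := (hd₂ s).const_smul (Real.cos θ)
    have h3 : HasDerivAt (fun t => (-(Real.sin θ) * (K₁ t / Real.sqrt ((K₁ t) ^ 2 + (K₂ t) ^ 2))) • ξ₃ t)
        ((-(Real.sin θ) * (K₁ s / ω)) • (-(K₂ s) • ξ₂ s)
          + (-(Real.sin θ) * (-(c * K₂ s))) • ξ₃ s) s :=
      ((hgd.const_mul (-(Real.sin θ))).smul (hd₃ s))
    have htot := (h1.add h2).add h3
    refine htot.congr_deriv ?_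
    rw [hcos]
    module
  · intro s
    rw [hd s]
    have h22 : (inner ℝ (ξ₂ s) (ξ₂ s) : ℝ) = 1 := by
      rw [real_inner_self_eq_norm_sq, hn₂ s]; norm_num
    have h21 : (inner ℝ (ξ₂ s) (ξ₁ s) : ℝ) = 0 := by
      rw [real_inner_comm]; exact ho₁₂ s
    simp [inner_add_right, inner_smul_right, h22, h21, ho₂₃ s, hn₂ s]
end

section
/- Let ξ₁, ξ₂, ξ₃ be a Frenet-type frame with curvatures K₁ > 0 and K₂. Define Y = ξ₂'/‖ξ₂'‖ and D = (K₂/√(K₁²+K₂²)) ξ₁ + (K₁/√(K₁²+K₂²)) ξ₃. Then the triple (ξ₂, Y, D) is pointwise orthonormal and satisfies ξ₂' = p Y, Y' = -p ξ₂ + q D, D' = -q Y, where p = √(K₁²+K₂²) and q = (K₁²/(K₁²+K₂²))·(K₂/K₁)'. -/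
open Real

local notation "E3" => EuclideanSpace ℝ (Fin 3)

/-- The alternative frame `(ξ₂, Y, D)` with `Y = ξ₂'/‖ξ₂'‖` and
`D = (K₂/√(K₁²+K₂²)) ξ₁ + (K₁/√(K₁²+K₂²)) ξ₃` is orthonormal and satisfies
`ξ₂' = p Y`, `Y' = -p ξ₂ + q D`, `D' = -q Y` with `p = √(K₁²+K₂²)` and
`q = (K₁²/(K₁²+K₂²))·(K₂/K₁)'`. -/
theorem alternative_frame_equations
    (ξ₁ ξ₂ ξ₃ : ℝ → E3) (K₁ K₂ : ℝ → ℝ)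
    (hξ₁ : ContDiff ℝ (⊤ : ℕ∞) ξ₁) (hξ₂ : ContDiff ℝ (⊤ : ℕ∞) ξ₂) (hξ₃ : ContDiff ℝ (⊤ : ℕ∞) ξ₃)
    (hK₁ : ContDiff ℝ (⊤ : ℕ∞) K₁) (hK₂ : ContDiff ℝ (⊤ : ℕ∞) K₂)
    (hK₁pos : ∀ s, 0 < K₁ s) (hKpos : ∀ s, 0 < (K₁ s) ^ 2 + (K₂ s) ^ 2)
    (hn₁ : ∀ s, ‖ξ₁ s‖ = 1) (hn₂ : ∀ s, ‖ξ₂ s‖ = 1) (hn₃ : ∀ s, ‖ξ₃ s‖ = 1)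
    (ho₁₂ : ∀ s, (inner ℝ (ξ₁ s) (ξ₂ s) : ℝ) = 0)
    (ho₁₃ : ∀ s, (inner ℝ (ξ₁ s) (ξ₃ s) : ℝ) = 0)
    (ho₂₃ : ∀ s, (inner ℝ (ξ₂ s) (ξ₃ s) : ℝ) = 0)
    (hd₁ : ∀ s, HasDerivAt ξ₁ (K₁ s • ξ₂ s) s)
    (hd₂ : ∀ s, HasDerivAt ξ₂ (-(K₁ s) • ξ₁ s + K₂ s • ξ₃ s) s)
    (hd₃ : ∀ s, HasDerivAt ξ₃ (-(K₂ s) • ξ₂ s) s)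
    (Y D : ℝ → E3) (p q : ℝ → ℝ)
    (hY : ∀ s, Y s = ‖deriv ξ₂ s‖⁻¹ • deriv ξ₂ s)
    (hD : ∀ s, D s = (K₂ s / Real.sqrt ((K₁ s) ^ 2 + (K₂ s) ^ 2)) • ξ₁ s
        + (K₁ s / Real.sqrt ((K₁ s) ^ 2 + (K₂ s) ^ 2)) • ξ₃ s)
    (hp : ∀ s, p s = Real.sqrt ((K₁ s) ^ 2 + (K₂ s) ^ 2))
    (hq : ∀ s, q s = (K₁ s) ^ 2 / ((K₁ s) ^ 2 + (K₂ s) ^ 2) *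
        deriv (fun t => K₂ t / K₁ t) s) :
    (∀ s, ‖ξ₂ s‖ = 1 ∧ ‖Y s‖ = 1 ∧ ‖D s‖ = 1 ∧
        (inner ℝ (ξ₂ s) (Y s) : ℝ) = 0 ∧ (inner ℝ (ξ₂ s) (D s) : ℝ) = 0 ∧
        (inner ℝ (Y s) (D s) : ℝ) = 0) ∧
    (∀ s, HasDerivAt ξ₂ (p s • Y s) s) ∧
    (∀ s, HasDerivAt Y (-(p s) • ξ₂ s + q s • D s) s) ∧
    (∀ s, HasDerivAt D (-(q s) • Y s) s) := by
  have hdk₁ : ∀ s, HasDerivAt K₁ (deriv K₁ s) s := fun s =>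
    ((hK₁.differentiable (by simp)) s).hasDerivAt
  have hdk₂ : ∀ s, HasDerivAt K₂ (deriv K₂ s) s := fun s =>
    ((hK₂.differentiable (by simp)) s).hasDerivAt
  have hppos : ∀ s, 0 < p s := fun s => by
    rw [hp]; exact Real.sqrt_pos.2 (hKpos s)
  have hp2 : ∀ s, p s ^ 2 = K₁ s ^ 2 + K₂ s ^ 2 := fun s => by
    rw [hp]; exact Real.sq_sqrt (hKpos s).le
  have hdp : ∀ s, HasDerivAt p
      ((2 * K₁ s * deriv K₁ s + 2 * K₂ s * deriv K₂ s) /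
        (2 * Real.sqrt (K₁ s ^ 2 + K₂ s ^ 2))) s := by
    intro s
    have h : HasDerivAt (fun t => K₁ t ^ 2 + K₂ t ^ 2)
        (2 * K₁ s * deriv K₁ s + 2 * K₂ s * deriv K₂ s) s := by
      have := ((hdk₁ s).pow 2).add ((hdk₂ s).pow 2)
      exact this.congr_deriv (by ring)
    have hpe : p = fun t => Real.sqrt (K₁ t ^ 2 + K₂ t ^ 2) := funext hp
    rw [hpe]
    exact h.sqrt (ne_of_gt (hKpos s))
  have hqd : ∀ s, deriv (fun t => K₂ t / K₁ t) s =
      (deriv K₂ s * K₁ s - K₂ s * deriv K₁ s) / (K₁ s) ^ 2 := fun s =>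
    ((hdk₂ s).div (hdk₁ s) (hK₁pos s).ne').deriv
  have hqe : ∀ s, q s = (deriv K₂ s * K₁ s - K₂ s * deriv K₁ s) /
      (K₁ s ^ 2 + K₂ s ^ 2) := by
    intro s
    have h1 := (hK₁pos s).ne'
    have h2 := (hKpos s).ne'
    rw [hq, hqd]
    field_simp
  have hinner : ∀ s (a b c d : ℝ),
      (inner ℝ (a • ξ₁ s + b • ξ₃ s) (c • ξ₁ s + d • ξ₃ s) : ℝ) = a * c + b * d := by
    intro s a b c d
    have h11 : (inner ℝ (ξ₁ s) (ξ₁ s) : ℝ) = 1 := by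
      rw [real_inner_self_eq_norm_sq, hn₁ s]; norm_num
    have h33 : (inner ℝ (ξ₃ s) (ξ₃ s) : ℝ) = 1 := by
      rw [real_inner_self_eq_norm_sq, hn₃ s]; norm_num
    have h31 : (inner ℝ (ξ₃ s) (ξ₁ s) : ℝ) = 0 := by
      rw [real_inner_comm]; exact ho₁₃ s
    have expand : (inner ℝ (a • ξ₁ s + b • ξ₃ s) (c • ξ₁ s + d • ξ₃ s) : ℝ)
        = a * c * (inner ℝ (ξ₁ s) (ξ₁ s) : ℝ) + a * d * (inner ℝ (ξ₁ s) (ξ₃ s) : ℝ)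
          + b * c * (inner ℝ (ξ₃ s) (ξ₁ s) : ℝ) + b * d * (inner ℝ (ξ₃ s) (ξ₃ s) : ℝ) := by
      simp only [inner_add_left, inner_add_right, real_inner_smul_left,
        real_inner_smul_right]
      ring
    rw [expand, h11, h33, h31, ho₁₃ s]
    ring
  have hnormc : ∀ s (a b : ℝ), ‖a • ξ₁ s + b • ξ₃ s‖ = Real.sqrt (a ^ 2 + b ^ 2) := by
    intro s a b
    rw [norm_eq_sqrt_real_inner, hinner]
    ring_nf
  have hderiv2 : ∀ s, deriv ξ₂ s = -(K₁ s) • ξ₁ s + K₂ s • ξ₃ s := fun s => (hd₂ s).deriv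
  have hnd2 : ∀ s, ‖deriv ξ₂ s‖ = p s := by
    intro s
    rw [hderiv2, hnormc, hp]
    ring_nf
  have hYe : ∀ s, Y s = (-(K₁ s) / p s) • ξ₁ s + (K₂ s / p s) • ξ₃ s := by
    intro s
    rw [hY s, hnd2 s, hderiv2 s, smul_add, smul_smul, smul_smul,
      div_eq_inv_mul, div_eq_inv_mul]
  have hDe : ∀ s, D s = (K₂ s / p s) • ξ₁ s + (K₁ s / p s) • ξ₃ s := by
    intro s
    rw [hD s, ← hp s]
  refine ⟨fun s => ?_, fun s => ?_, fun s => ?_, fun s => ?_⟩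
  · have hr0 := (hppos s).ne'
    refine ⟨hn₂ s, ?_, ?_, ?_, ?_, ?_⟩
    · rw [hYe s, hnormc, show (-(K₁ s) / p s) ^ 2 + (K₂ s / p s) ^ 2 = 1 by
        field_simp; linarith [hp2 s]]
      exact Real.sqrt_one
    · rw [hDe s, hnormc, show (K₂ s / p s) ^ 2 + (K₁ s / p s) ^ 2 = 1 by
        field_simp; linarith [hp2 s]]
      exact Real.sqrt_one
    · have h21 : (inner ℝ (ξ₂ s) (ξ₁ s) : ℝ) = 0 := by
        rw [real_inner_comm]; exact ho₁₂ s
      rw [hYe s]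
      simp only [inner_add_right, real_inner_smul_right, h21, ho₂₃ s, mul_zero, add_zero]
    · have h21 : (inner ℝ (ξ₂ s) (ξ₁ s) : ℝ) = 0 := by
        rw [real_inner_comm]; exact ho₁₂ s
      rw [hDe s]
      simp only [inner_add_right, real_inner_smul_right, h21, ho₂₃ s, mul_zero, add_zero]
    · rw [hYe s, hDe s, hinner]
      ring
  · have key : p s • Y s = -(K₁ s) • ξ₁ s + K₂ s • ξ₃ s := by
      rw [hYe s, smul_add, smul_smul, smul_smul]
      have hr0 := (hppos s).ne'
      congr 1 <;> · congr 1; field_simp; try ring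
    rw [key]
    exact hd₂ s
  · have hr0 := (hppos s).ne'
    have hA := ((hdk₁ s).neg.div (hdp s) hr0)
    have hB := ((hdk₂ s).div (hdp s) hr0)
    have hY' := (hA.smul (hd₁ s)).add (hB.smul (hd₃ s))
    have hYfun : Y = fun t => (-(K₁ t) / p t) • ξ₁ t + (K₂ t / p t) • ξ₃ t := funext hYe
    rw [hYfun]
    refine hY'.congr_deriv (Eq.symm ?_)
    rw [hDe s, hqe s, ← hp s]
    match_scalars
    · have hr2 := hp2 s
      simp only [Pi.div_apply, Pi.neg_apply]
      field_simp
      linear_combination (-1) * hr2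
    · have hr2 := hp2 s
      rw [← hr2]
      field_simp
      simp only [Pi.neg_apply]
      linear_combination (deriv K₁ s) * hr2
    · have hr2 := hp2 s
      rw [← hr2]
      field_simp
      linear_combination (-deriv K₂ s) * hr2
  · have hr0 := (hppos s).ne'
    have hB := ((hdk₂ s).div (hdp s) hr0)
    have hC := ((hdk₁ s).div (hdp s) hr0)
    have hD' := (hB.smul (hd₁ s)).add (hC.smul (hd₃ s))
    have hDfun : D = fun t => (K₂ t / p t) • ξ₁ t + (K₁ t / p t) • ξ₃ t := funext hDe
    rw [hDfun]
    refine hD'.congr_deriv (Eq.symm ?_)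
    rw [hYe s, hqe s, ← hp s]
    match_scalars
    · have hr2 := hp2 s
      rw [← hr2]
      field_simp
      linear_combination (-deriv K₂ s) * hr2
    · have hr2 := hp2 s
      rw [← hr2]
      field_simp
      linear_combination (-deriv K₁ s) * hr2
    · simp only [Pi.div_apply]
      field_simp
      ring
end

section
/- Let (ξ₂, Y, D) be an orthonormal moving frame satisfying ξ₂' = p Y, Y' = -p ξ₂ + q D, D' = -q Y with smooth functions p, q where q ≠ 0 everywhere. If there exists a constant unit vector l and a constant angle φ with ⟨D(s), l⟩ = cos φ for all s, then ⟨Y(s), l⟩ = 0 for all s and l(s) = ∓ sin φ · ξ₂(s) + cos φ · D(s); consequently p/q = ∓ cot φ is constant. -/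
open Real

local notation "E3" => EuclideanSpace ℝ (Fin 3)

/-- If `D` of an alternative frame makes a constant angle `φ` with a fixed
unit vector `l`, then `⟨Y, l⟩ ≡ 0`, `l = ∓ sin φ · ξ₂ + cos φ · D`, and
`p/q = ∓ cot φ` is constant. -/
theorem darboux_helix_axis
    (ξ₂ Y D : ℝ → E3) (p q : ℝ → ℝ)
    (hξ₂ : ContDiff ℝ (⊤ : ℕ∞) ξ₂) (hY : ContDiff ℝ (⊤ : ℕ∞) Y) (hD : ContDiff ℝ (⊤ : ℕ∞) D)
    (hp : ContDiff ℝ (⊤ : ℕ∞) p) (hq : ContDiff ℝ (⊤ : ℕ∞) q) (hq0 : ∀ s, q s ≠ 0)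
    (hn₁ : ∀ s, ‖ξ₂ s‖ = 1) (hn₂ : ∀ s, ‖Y s‖ = 1) (hn₃ : ∀ s, ‖D s‖ = 1)
    (ho₁₂ : ∀ s, (inner ℝ (ξ₂ s) (Y s) : ℝ) = 0)
    (ho₁₃ : ∀ s, (inner ℝ (ξ₂ s) (D s) : ℝ) = 0)
    (ho₂₃ : ∀ s, (inner ℝ (Y s) (D s) : ℝ) = 0)
    (hd₁ : ∀ s, HasDerivAt ξ₂ (p s • Y s) s)
    (hd₂ : ∀ s, HasDerivAt Y (-(p s) • ξ₂ s + q s • D s) s)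
    (hd₃ : ∀ s, HasDerivAt D (-(q s) • Y s) s)
    (l : E3) (hl : ‖l‖ = 1) (φ : ℝ)
    (hangle : ∀ s, (inner ℝ (D s) l : ℝ) = Real.cos φ) :
    (∀ s, (inner ℝ (Y s) l : ℝ) = 0) ∧
    ∃ ε : ℝ, (ε = 1 ∨ ε = -1) ∧
      (∀ s, l = (ε * Real.sin φ) • ξ₂ s + Real.cos φ • D s) ∧
      (∀ s, p s / q s = ε * (Real.cos φ / Real.sin φ)) := by
  -- ⟨Y, l⟩ ≡ 0
  have hYl0 : ∀ s, (inner ℝ (Y s) l : ℝ) = 0 := by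
    intro s
    have hder := (hd₃ s).inner ℝ (hasDerivAt_const s l)
    have hconst : (fun t => (inner ℝ (D t) l : ℝ)) = fun _ => Real.cos φ := funext hangle
    have h0 : HasDerivAt (fun t => (inner ℝ (D t) l : ℝ)) 0 s := by
      rw [hconst]; exact hasDerivAt_const s _
    have hu := hder.unique h0
    rw [inner_zero_right, zero_add, real_inner_smul_left] at hu
    rcases mul_eq_zero.mp hu with h | h
    · exact absurd (neg_eq_zero.mp h) (hq0 s)
    · exact h
  -- a := ⟨ξ₂ s, l⟩ is constant
  have haderiv : ∀ s, HasDerivAt (fun t => (inner ℝ (ξ₂ t) l : ℝ)) 0 s := by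
    intro s
    have hder := (hd₁ s).inner ℝ (hasDerivAt_const s l)
    have hz : (inner ℝ (ξ₂ s) (0 : E3) : ℝ) + (inner ℝ (p s • Y s) l : ℝ) = 0 := by
      rw [inner_zero_right, real_inner_smul_left, hYl0 s]; ring
    rwa [hz] at hder
  have haconst : ∀ s, (inner ℝ (ξ₂ s) l : ℝ) = (inner ℝ (ξ₂ 0) l : ℝ) := fun s =>
    is_const_of_deriv_eq_zero (fun t => (haderiv t).differentiableAt)
      (fun t => (haderiv t).deriv) s 0
  set a : ℝ := (inner ℝ (ξ₂ 0) l : ℝ) with ha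
  -- inner products of the frame vectors
  have i11 : ∀ s, (inner ℝ (ξ₂ s) (ξ₂ s) : ℝ) = 1 := fun s => by
    rw [real_inner_self_eq_norm_sq, hn₁ s]; norm_num
  have i22 : ∀ s, (inner ℝ (Y s) (Y s) : ℝ) = 1 := fun s => by
    rw [real_inner_self_eq_norm_sq, hn₂ s]; norm_num
  have i33 : ∀ s, (inner ℝ (D s) (D s) : ℝ) = 1 := fun s => by
    rw [real_inner_self_eq_norm_sq, hn₃ s]; norm_num
  have i21 : ∀ s, (inner ℝ (Y s) (ξ₂ s) : ℝ) = 0 := fun s => by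
    rw [real_inner_comm]; exact ho₁₂ s
  have i31 : ∀ s, (inner ℝ (D s) (ξ₂ s) : ℝ) = 0 := fun s => by
    rw [real_inner_comm]; exact ho₁₃ s
  have i32 : ∀ s, (inner ℝ (D s) (Y s) : ℝ) = 0 := fun s => by
    rw [real_inner_comm]; exact ho₂₃ s
  -- the frame is a basis
  have hbasis : ∀ s, ∃ b : Module.Basis (Fin 3) ℝ E3, ⇑b = ![ξ₂ s, Y s, D s] := by
    intro s
    have horth : Orthonormal ℝ ![ξ₂ s, Y s, D s] := by
      rw [orthonormal_iff_ite]
      intro i j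
      fin_cases i <;> fin_cases j <;>
        simp only [Matrix.cons_val_zero, Matrix.cons_val_one, Matrix.head_cons,
          Matrix.cons_val_two, Matrix.tail_cons, Fin.mk_zero, Fin.mk_one] <;>
        norm_num [i11 s, i22 s, i33 s, i21 s, i31 s, i32 s, ho₁₂ s, ho₁₃ s, ho₂₃ s, Fin.ext_iff, hn₁ s, hn₂ s, hn₃ s]
    refine ⟨basisOfLinearIndependentOfCardEqFinrank horth.linearIndependent (by simp), ?_⟩
    exact coe_basisOfLinearIndependentOfCardEqFinrank _ _
  -- expression of l in the frame
  have hlrep : ∀ s, l = a • ξ₂ s + Real.cos φ • D s := by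
    intro s
    obtain ⟨b, hb⟩ := hbasis s
    refine (InnerProductSpace.ext_inner_left_basis b fun i => ?_).symm
    have h1 := haconst s
    fin_cases i <;>
      · simp only [hb]
        simp [-PiLp.inner_apply, inner_add_right, real_inner_smul_right,
          i11 s, ho₁₃ s, h1, i21 s, ho₂₃ s, hYl0 s, i31 s, i33 s, hangle s, hn₁ s, hn₃ s]
  -- a² + cos²φ = 1
  have hsum : a ^ 2 + Real.cos φ ^ 2 = 1 := by
    have h := hlrep 0
    have hx : ‖l‖ ^ 2 = ‖a • ξ₂ 0‖ ^ 2 + 2 * (inner ℝ (a • ξ₂ 0) (Real.cos φ • D 0) : ℝ)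
        + ‖Real.cos φ • D 0‖ ^ 2 := by rw [h]; exact norm_add_sq_real _ _
    rw [hl, norm_smul, norm_smul, hn₁ 0, hn₃ 0, real_inner_smul_left,
      real_inner_smul_right, ho₁₃ 0] at hx
    simp only [Real.norm_eq_abs, mul_one, mul_zero, add_zero] at hx
    rw [sq_abs, sq_abs] at hx
    linarith
  have ha2 : a * a = Real.sin φ * Real.sin φ := by
    have := Real.sin_sq_add_cos_sq φ
    nlinarith
  -- relation p a = q cos φ
  have hpq : ∀ s, p s * a = q s * Real.cos φ := by
    intro s
    have hder := (hd₂ s).inner ℝ (hasDerivAt_const s l)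
    have h0 : HasDerivAt (fun t => (inner ℝ (Y t) l : ℝ)) 0 s := by
      have hc : (fun t => (inner ℝ (Y t) l : ℝ)) = fun _ => (0 : ℝ) := funext hYl0
      rw [hc]; exact hasDerivAt_const s _
    have hu := hder.unique h0
    rw [inner_zero_right, zero_add, inner_add_left, real_inner_smul_left,
      real_inner_smul_left, haconst s, hangle s] at hu
    have := hu
    nlinarith [this]
  -- sin φ ≠ 0
  have hsin : Real.sin φ ≠ 0 := by
    intro h
    have ha0 : a = 0 := by nlinarith [ha2]
    have hc : Real.cos φ ≠ 0 := by
      intro hc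
      have := Real.sin_sq_add_cos_sq φ
      rw [h, hc] at this; norm_num at this
    have h1 := hpq 0
    rw [ha0, mul_zero] at h1
    rcases mul_eq_zero.mp h1.symm with h' | h'
    · exact hq0 0 h'
    · exact hc h'
  have hane : a ≠ 0 := fun h0 => hsin (by nlinarith [ha2])
  refine ⟨hYl0, a / Real.sin φ, ?_, ?_, ?_⟩
  · have h1 : (a / Real.sin φ) * (a / Real.sin φ) = 1 := by
      field_simp
      linear_combination ha2
    exact mul_self_eq_one_iff.mp h1
  · intro s
    have h1 : (a / Real.sin φ) * Real.sin φ = a := by field_simp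
    rw [h1]; exact hlrep s
  · intro s
    have h1 : p s / q s = Real.cos φ / a := by
      rw [div_eq_div_iff (hq0 s) hane]
      linear_combination hpq s
    have h2 : a / Real.sin φ * (Real.cos φ / Real.sin φ) = Real.cos φ / a := by
      rw [div_mul_div_comm, div_eq_div_iff (mul_ne_zero hsin hsin) hane]
      linear_combination Real.cos φ * ha2
    rw [h1, h2]
end

section
/- Let (ξ₂, Y, D) be an alternative frame with equations ξ₂' = p Y, Y' = -p ξ₂ + q D, D' = -q Y, where p > 0 and q ≠ 0. Then D makes a constant angle with some fixed unit vector (Darboux helix) if and only if ξ₂ makes a constant angle with some fixed unit vector (slant helix); both conditions are equivalent to p/q being constant. -/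
open Real

local notation "E3" => EuclideanSpace ℝ (Fin 3)

lemma const_of_derivAt_zero {f : ℝ → ℝ} (h : ∀ s, HasDerivAt f 0 s) (s : ℝ) : f s = f 0 :=
  is_const_of_deriv_eq_zero (fun t => (h t).differentiableAt) (fun t => (h t).deriv) s 0

lemma vec_const_of_derivAt_zero {f : ℝ → E3} (h : ∀ s, HasDerivAt f 0 s) (s : ℝ) : f s = f 0 :=
  is_const_of_deriv_eq_zero (fun t => (h t).differentiableAt) (fun t => (h t).deriv) s 0

lemma triple_complete (a b c v : E3) (ha : ‖a‖ = 1) (hb : ‖b‖ = 1) (hc : ‖c‖ = 1)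
    (hab : (inner ℝ a b : ℝ) = 0) (hac : (inner ℝ a c : ℝ) = 0) (hbc : (inner ℝ b c : ℝ) = 0)
    (h1 : (inner ℝ a v : ℝ) = 0) (h2 : (inner ℝ b v : ℝ) = 0) (h3 : (inner ℝ c v : ℝ) = 0) :
    v = 0 := by
  have haa : (inner ℝ a a : ℝ) = 1 := by
    rw [real_inner_self_eq_norm_mul_norm, ha]; ring
  have hbb : (inner ℝ b b : ℝ) = 1 := by
    rw [real_inner_self_eq_norm_mul_norm, hb]; ring
  have hcc : (inner ℝ c c : ℝ) = 1 := by
    rw [real_inner_self_eq_norm_mul_norm, hc]; ring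
  set f : Fin 3 → E3 := ![a, b, c] with hf
  have hv : Orthonormal ℝ f := by
    rw [orthonormal_iff_ite]
    intro i j
    fin_cases i <;> fin_cases j <;>
      simp [hf, ha, hb, hc, haa, hbb, hcc, hab, hac, hbc, real_inner_comm a b, real_inner_comm a c,
        real_inner_comm b c]
  have hcard : Fintype.card (Fin 3) = Module.finrank ℝ E3 := by
    simp [finrank_euclideanSpace]
  set B : Module.Basis (Fin 3) ℝ E3 := basisOfOrthonormalOfCardEqFinrank hv hcard
  have hBf : ⇑B = f := coe_basisOfOrthonormalOfCardEqFinrank hv hcard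
  have hv' : Orthonormal ℝ ⇑B := by rwa [hBf]
  set OB := B.toOrthonormalBasis hv'
  have hOB : ⇑OB = f := by
    rw [show ⇑OB = ⇑B from Module.Basis.coe_toOrthonormalBasis B hv', hBf]
  have := OB.sum_repr' v
  rw [hOB] at this
  rw [← this, Fin.sum_univ_three]
  simp [hf, h1, h2, h3]

/-- For an alternative frame with `p > 0`, `q ≠ 0`, the Darboux-helix
condition, the slant-helix condition and the constancy of `p/q` are all equivalent. -/
theorem darboux_helix_iff_slant_helix
    (ξ₂ Y D : ℝ → E3) (p q : ℝ → ℝ)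
    (hξ₂ : ContDiff ℝ (⊤ : ℕ∞) ξ₂) (hY : ContDiff ℝ (⊤ : ℕ∞) Y) (hD : ContDiff ℝ (⊤ : ℕ∞) D)
    (hp : ContDiff ℝ (⊤ : ℕ∞) p) (hq : ContDiff ℝ (⊤ : ℕ∞) q)
    (hppos : ∀ s, 0 < p s) (hq0 : ∀ s, q s ≠ 0)
    (hn₁ : ∀ s, ‖ξ₂ s‖ = 1) (hn₂ : ∀ s, ‖Y s‖ = 1) (hn₃ : ∀ s, ‖D s‖ = 1)
    (ho₁₂ : ∀ s, (inner ℝ (ξ₂ s) (Y s) : ℝ) = 0)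
    (ho₁₃ : ∀ s, (inner ℝ (ξ₂ s) (D s) : ℝ) = 0)
    (ho₂₃ : ∀ s, (inner ℝ (Y s) (D s) : ℝ) = 0)
    (hd₁ : ∀ s, HasDerivAt ξ₂ (p s • Y s) s)
    (hd₂ : ∀ s, HasDerivAt Y (-(p s) • ξ₂ s + q s • D s) s)
    (hd₃ : ∀ s, HasDerivAt D (-(q s) • Y s) s) :
    ((∃ l : E3, ‖l‖ = 1 ∧ ∃ φ : ℝ, ∀ s, (inner ℝ (D s) l : ℝ) = Real.cos φ) ↔
      (∃ d : E3, ‖d‖ = 1 ∧ ∃ θ : ℝ, ∀ s, (inner ℝ (ξ₂ s) d : ℝ) = Real.cos θ)) ∧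
    ((∃ l : E3, ‖l‖ = 1 ∧ ∃ φ : ℝ, ∀ s, (inner ℝ (D s) l : ℝ) = Real.cos φ) ↔
      (∃ c : ℝ, ∀ s, p s / q s = c)) := by
  -- Darboux helix implies p/q constant
  have hDC : (∃ l : E3, ‖l‖ = 1 ∧ ∃ φ : ℝ, ∀ s, (inner ℝ (D s) l : ℝ) = Real.cos φ) →
      (∃ c : ℝ, ∀ s, p s / q s = c) := by
    rintro ⟨l, hl, φ, hφ⟩
    have hYl : ∀ s, (inner ℝ (Y s) l : ℝ) = 0 := by
      intro s
      have h1 : HasDerivAt (fun t => (inner ℝ (D t) l : ℝ))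
          ((inner ℝ (D s) (0 : E3) : ℝ) + (inner ℝ (-(q s) • Y s) l : ℝ)) s :=
        (hd₃ s).inner ℝ (hasDerivAt_const s l)
      have h2 : HasDerivAt (fun t => (inner ℝ (D t) l : ℝ)) 0 s := by
        have hfun : (fun t => (inner ℝ (D t) l : ℝ)) = fun _ => Real.cos φ := funext hφ
        rw [hfun]; exact hasDerivAt_const s _
      have h3 := h1.unique h2
      simp only [inner_zero_right, real_inner_smul_left, zero_add, neg_mul, neg_eq_zero] at h3
      rcases mul_eq_zero.mp h3 with h | h
      · exact absurd h (hq0 s)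
      · exact h
    have hrel : ∀ s, p s * (inner ℝ (ξ₂ s) l : ℝ) = q s * Real.cos φ := by
      intro s
      have h1 : HasDerivAt (fun t => (inner ℝ (Y t) l : ℝ))
          ((inner ℝ (Y s) (0 : E3) : ℝ) + (inner ℝ (-(p s) • ξ₂ s + q s • D s) l : ℝ)) s :=
        (hd₂ s).inner ℝ (hasDerivAt_const s l)
      have h2 : HasDerivAt (fun t => (inner ℝ (Y t) l : ℝ)) 0 s := by
        have hfun : (fun t => (inner ℝ (Y t) l : ℝ)) = fun _ => (0 : ℝ) := funext hYl
        rw [hfun]; exact hasDerivAt_const s _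
      have h3 := h1.unique h2
      simp only [inner_zero_right, inner_add_left, real_inner_smul_left, zero_add, neg_mul,
        hφ s] at h3
      linarith
    have hξl : ∀ s, (inner ℝ (ξ₂ s) l : ℝ) = (inner ℝ (ξ₂ 0) l : ℝ) := by
      apply const_of_derivAt_zero
      intro s
      have h1 : HasDerivAt (fun t => (inner ℝ (ξ₂ t) l : ℝ))
          ((inner ℝ (ξ₂ s) (0 : E3) : ℝ) + (inner ℝ (p s • Y s) l : ℝ)) s :=
        (hd₁ s).inner ℝ (hasDerivAt_const s l)
      have hz : (inner ℝ (ξ₂ s) (0 : E3) : ℝ) + (inner ℝ (p s • Y s) l : ℝ) = 0 := by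
        rw [inner_zero_right, real_inner_smul_left, hYl s]; ring
      rwa [hz] at h1
    by_cases hcos : Real.cos φ = 0
    · exfalso
      have hξl0 : (inner ℝ (ξ₂ 0) l : ℝ) = 0 := by
        have := hrel 0
        rw [hcos, mul_zero] at this
        exact (mul_eq_zero.mp this).resolve_left (hppos 0).ne'
      have hDl0 : (inner ℝ (D 0) l : ℝ) = 0 := by rw [hφ 0, hcos]
      have : l = 0 := triple_complete (ξ₂ 0) (Y 0) (D 0) l (hn₁ 0) (hn₂ 0) (hn₃ 0)
        (ho₁₂ 0) (ho₁₃ 0) (ho₂₃ 0) hξl0 (hYl 0) hDl0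
      rw [this, norm_zero] at hl
      exact one_ne_zero hl.symm
    · set m := (inner ℝ (ξ₂ 0) l : ℝ) with hm
      have hm0 : m ≠ 0 := by
        intro h0
        have := hrel 0
        rw [hξl 0, h0, mul_zero] at this
        exact hcos ((mul_eq_zero.mp this.symm).resolve_left (hq0 0))
      refine ⟨Real.cos φ / m, fun s => ?_⟩
      have h := hrel s
      rw [hξl s] at h
      rw [div_eq_div_iff (hq0 s) hm0]
      linarith
  -- slant helix implies p/q constant
  have hSC : (∃ d : E3, ‖d‖ = 1 ∧ ∃ θ : ℝ, ∀ s, (inner ℝ (ξ₂ s) d : ℝ) = Real.cos θ) →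
      (∃ c : ℝ, ∀ s, p s / q s = c) := by
    rintro ⟨d, hdn, θ, hθ⟩
    have hYd : ∀ s, (inner ℝ (Y s) d : ℝ) = 0 := by
      intro s
      have h1 : HasDerivAt (fun t => (inner ℝ (ξ₂ t) d : ℝ))
          ((inner ℝ (ξ₂ s) (0 : E3) : ℝ) + (inner ℝ (p s • Y s) d : ℝ)) s :=
        (hd₁ s).inner ℝ (hasDerivAt_const s d)
      have h2 : HasDerivAt (fun t => (inner ℝ (ξ₂ t) d : ℝ)) 0 s := by
        have hfun : (fun t => (inner ℝ (ξ₂ t) d : ℝ)) = fun _ => Real.cos θ := funext hθ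
        rw [hfun]; exact hasDerivAt_const s _
      have h3 := h1.unique h2
      simp only [inner_zero_right, real_inner_smul_left, zero_add] at h3
      exact (mul_eq_zero.mp h3).resolve_left (hppos s).ne'
    have hrel : ∀ s, q s * (inner ℝ (D s) d : ℝ) = p s * Real.cos θ := by
      intro s
      have h1 : HasDerivAt (fun t => (inner ℝ (Y t) d : ℝ))
          ((inner ℝ (Y s) (0 : E3) : ℝ) + (inner ℝ (-(p s) • ξ₂ s + q s • D s) d : ℝ)) s :=
        (hd₂ s).inner ℝ (hasDerivAt_const s d)
      have h2 : HasDerivAt (fun t => (inner ℝ (Y t) d : ℝ)) 0 s := by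
        have hfun : (fun t => (inner ℝ (Y t) d : ℝ)) = fun _ => (0 : ℝ) := funext hYd
        rw [hfun]; exact hasDerivAt_const s _
      have h3 := h1.unique h2
      simp only [inner_zero_right, inner_add_left, real_inner_smul_left, zero_add, neg_mul,
        hθ s] at h3
      linarith
    have hDd : ∀ s, (inner ℝ (D s) d : ℝ) = (inner ℝ (D 0) d : ℝ) := by
      apply const_of_derivAt_zero
      intro s
      have h1 : HasDerivAt (fun t => (inner ℝ (D t) d : ℝ))
          ((inner ℝ (D s) (0 : E3) : ℝ) + (inner ℝ (-(q s) • Y s) d : ℝ)) s :=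
        (hd₃ s).inner ℝ (hasDerivAt_const s d)
      have hz : (inner ℝ (D s) (0 : E3) : ℝ) + (inner ℝ (-(q s) • Y s) d : ℝ) = 0 := by
        rw [inner_zero_right, real_inner_smul_left, hYd s]; ring
      rwa [hz] at h1
    by_cases hcos : Real.cos θ = 0
    · exfalso
      have hDd0 : (inner ℝ (D 0) d : ℝ) = 0 := by
        have := hrel 0
        rw [hcos, mul_zero] at this
        exact (mul_eq_zero.mp this).resolve_left (hq0 0)
      have hξd0 : (inner ℝ (ξ₂ 0) d : ℝ) = 0 := by rw [hθ 0, hcos]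
      have : d = 0 := triple_complete (ξ₂ 0) (Y 0) (D 0) d (hn₁ 0) (hn₂ 0) (hn₃ 0)
        (ho₁₂ 0) (ho₁₃ 0) (ho₂₃ 0) hξd0 (hYd 0) hDd0
      rw [this, norm_zero] at hdn
      exact one_ne_zero hdn.symm
    · set k := (inner ℝ (D 0) d : ℝ) with hk
      refine ⟨k / Real.cos θ, fun s => ?_⟩
      have h := hrel s
      rw [hDd s] at h
      rw [div_eq_div_iff (hq0 s) hcos]
      linarith
  -- p/q constant implies both helix conditions
  have hC2 : (∃ c : ℝ, ∀ s, p s / q s = c) →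
      ((∃ l : E3, ‖l‖ = 1 ∧ ∃ φ : ℝ, ∀ s, (inner ℝ (D s) l : ℝ) = Real.cos φ) ∧
       (∃ d : E3, ‖d‖ = 1 ∧ ∃ θ : ℝ, ∀ s, (inner ℝ (ξ₂ s) d : ℝ) = Real.cos θ)) := by
    rintro ⟨c, hc⟩
    have hpq : ∀ s, p s = c * q s := by
      intro s
      have := (div_eq_iff (hq0 s)).mp (hc s)
      linarith
    set r := Real.sqrt (1 + c ^ 2) with hr
    have hr2 : r ^ 2 = 1 + c ^ 2 := Real.sq_sqrt (by positivity)
    have hrpos : 0 < r := Real.sqrt_pos.mpr (by positivity)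
    have hr1 : 1 ≤ r := by nlinarith
    set w : ℝ → E3 := fun s => ξ₂ s + c • D s with hw
    have hwconst : ∀ s, w s = w 0 := by
      apply vec_const_of_derivAt_zero
      intro s
      have h1 : HasDerivAt w (p s • Y s + c • (-(q s) • Y s)) s :=
        (hd₁ s).add ((hd₃ s).const_smul c)
      have : p s • Y s + c • (-(q s) • Y s) = 0 := by
        rw [smul_smul, ← add_smul]
        have : p s + c * -q s = 0 := by rw [hpq s]; ring
        rw [this, zero_smul]
      rwa [this] at h1
    set u : E3 := r⁻¹ • w 0 with hu
    have hinnerw : ∀ s, (inner ℝ (w s) (w s) : ℝ) = 1 + c ^ 2 := by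
      intro s
      rw [hw]
      simp only [inner_add_left, inner_add_right, real_inner_smul_left, real_inner_smul_right]
      have h11 : (inner ℝ (ξ₂ s) (ξ₂ s) : ℝ) = 1 := by
        rw [real_inner_self_eq_norm_mul_norm, hn₁ s]; ring
      have h33 : (inner ℝ (D s) (D s) : ℝ) = 1 := by
        rw [real_inner_self_eq_norm_mul_norm, hn₃ s]; ring
      rw [h11, h33, real_inner_comm (ξ₂ s) (D s), ho₁₃ s]
      ring
    have hun : ‖u‖ = 1 := by
      have h1 : (inner ℝ u u : ℝ) = 1 := by
        rw [hu]
        simp only [real_inner_smul_left, real_inner_smul_right]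
        rw [hinnerw 0]
        field_simp
        nlinarith
      have h2 : ‖u‖ * ‖u‖ = 1 := by rw [← real_inner_self_eq_norm_mul_norm, h1]
      nlinarith [norm_nonneg u]
    have hξu : ∀ s, (inner ℝ (ξ₂ s) u : ℝ) = r⁻¹ := by
      intro s
      rw [hu, ← hwconst s, hw]
      simp only [real_inner_smul_right, inner_add_right, real_inner_smul_right]
      have h11 : (inner ℝ (ξ₂ s) (ξ₂ s) : ℝ) = 1 := by
        rw [real_inner_self_eq_norm_mul_norm, hn₁ s]; ring
      rw [h11, ho₁₃ s]
      ring
    have hDu : ∀ s, (inner ℝ (D s) u : ℝ) = c / r := by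
      intro s
      rw [hu, ← hwconst s, hw]
      simp only [real_inner_smul_right, inner_add_right, real_inner_smul_right]
      have h33 : (inner ℝ (D s) (D s) : ℝ) = 1 := by
        rw [real_inner_self_eq_norm_mul_norm, hn₃ s]; ring
      rw [h33, real_inner_comm (ξ₂ s) (D s), ho₁₃ s]
      rw [zero_add]
      rw [div_eq_inv_mul]
      ring
    constructor
    · refine ⟨u, hun, Real.arccos (c / r), fun s => ?_⟩
      rw [hDu s, Real.cos_arccos]
      · rw [le_div_iff₀ hrpos]
        nlinarith [sq_nonneg (c + r)]
      · rw [div_le_one hrpos]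
        nlinarith [sq_nonneg (c - r)]
    · refine ⟨u, hun, Real.arccos r⁻¹, fun s => ?_⟩
      rw [hξu s, Real.cos_arccos]
      · have : (0:ℝ) < r⁻¹ := by positivity
        linarith
      · rw [inv_eq_one_div, div_le_one hrpos]
        exact hr1
  exact ⟨⟨fun h => (hC2 (hDC h)).2, fun h => (hC2 (hSC h)).1⟩,
    ⟨hDC, fun h => (hC2 h).1⟩⟩
end

section
/- Let (ξ₂, Y, D) be an alternative frame with ξ₂' = p Y, Y' = -p ξ₂ + q D, D' = -q Y, where p and q are smooth and nowhere zero. Then ξ₂ satisfies the third-order ODE ξ₂''' - [p'/p + (pq)'/(pq)] ξ₂'' + { pq·[(1/p)'·(1/q)]' + p² + q² } ξ₂' + pq·(p/q)' ξ₂ = 0. -/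
open Real

local notation "E3" => EuclideanSpace ℝ (Fin 3)

/-- The versor field ξ₂ of an alternative frame satisfies
ξ₂''' - [p'/p + (pq)'/(pq)] ξ₂'' + { pq[(1/p)'(1/q)]' + p² + q² } ξ₂' + pq (p/q)' ξ₂ = 0. -/
theorem xi2_third_order_ode
    (ξ₂ Y D : ℝ → E3) (p q : ℝ → ℝ)
    (hξ₂ : ContDiff ℝ (⊤ : ℕ∞) ξ₂) (hY : ContDiff ℝ (⊤ : ℕ∞) Y) (hD : ContDiff ℝ (⊤ : ℕ∞) D)
    (hp : ContDiff ℝ (⊤ : ℕ∞) p) (hq : ContDiff ℝ (⊤ : ℕ∞) q)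
    (hp0 : ∀ s, p s ≠ 0) (hq0 : ∀ s, q s ≠ 0)
    (hn₁ : ∀ s, ‖ξ₂ s‖ = 1) (hn₂ : ∀ s, ‖Y s‖ = 1) (hn₃ : ∀ s, ‖D s‖ = 1)
    (ho₁₂ : ∀ s, (inner ℝ (ξ₂ s) (Y s) : ℝ) = 0)
    (ho₁₃ : ∀ s, (inner ℝ (ξ₂ s) (D s) : ℝ) = 0)
    (ho₂₃ : ∀ s, (inner ℝ (Y s) (D s) : ℝ) = 0)
    (hd₁ : ∀ s, HasDerivAt ξ₂ (p s • Y s) s)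
    (hd₂ : ∀ s, HasDerivAt Y (-(p s) • ξ₂ s + q s • D s) s)
    (hd₃ : ∀ s, HasDerivAt D (-(q s) • Y s) s) :
    ∀ s, deriv (deriv (deriv ξ₂)) s
      - (deriv p s / p s + deriv (fun t => p t * q t) s / (p s * q s)) • deriv (deriv ξ₂) s
      + (p s * q s * deriv (fun t => deriv (fun u => (p u)⁻¹) t * (q t)⁻¹) s
          + (p s) ^ 2 + (q s) ^ 2) • deriv ξ₂ s
      + (p s * q s * deriv (fun t => p t / q t) s) • ξ₂ s = 0 := by
  have hp' : ∀ s, HasDerivAt p (deriv p s) s := fun s => (hp.differentiable (by simp) s).hasDerivAt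
  have hq' : ∀ s, HasDerivAt q (deriv q s) s := fun s => (hq.differentiable (by simp) s).hasDerivAt
  have hpd : Differentiable ℝ (deriv p) :=
    (contDiff_infty_iff_deriv.mp (hp.of_le (by simp))).2.differentiable (by norm_num)
  have hp'' : ∀ s, HasDerivAt (deriv p) (deriv (deriv p) s) s := fun s => (hpd s).hasDerivAt
  have e1 : deriv ξ₂ = fun s => p s • Y s := funext fun s => (hd₁ s).deriv
  have hd2' : ∀ s, HasDerivAt (deriv ξ₂)
      (p s • (-(p s) • ξ₂ s + q s • D s) + deriv p s • Y s) s := by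
    rw [e1]; exact fun s => (hp' s).smul (hd₂ s)
  have e2 : deriv (deriv ξ₂) = fun s =>
      p s • (-(p s) • ξ₂ s + q s • D s) + deriv p s • Y s :=
    funext fun s => (hd2' s).deriv
  have hd3' : ∀ s, HasDerivAt (deriv (deriv ξ₂))
      ((p s • (-(p s) • (p s • Y s) + -(deriv p s) • ξ₂ s + (q s • (-(q s) • Y s) + deriv q s • D s))
          + deriv p s • (-(p s) • ξ₂ s + q s • D s))
        + (deriv p s • (-(p s) • ξ₂ s + q s • D s) + deriv (deriv p) s • Y s)) s := by
    rw [e2]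
    intro s
    exact ((hp' s).smul (((hp' s).neg.smul (hd₁ s)).add ((hq' s).smul (hd₃ s)))).add
      ((hp'' s).smul (hd₂ s))
  have einv : deriv (fun u => (p u)⁻¹) = fun s => -(deriv p s) / p s ^ 2 :=
    funext fun s => ((hp' s).inv (hp0 s)).deriv
  intro s
  have epq : deriv (fun t => p t * q t) s = deriv p s * q s + p s * deriv q s :=
    ((hp' s).mul (hq' s)).deriv
  have ediv : deriv (fun t => p t / q t) s
      = (deriv p s * q s - p s * deriv q s) / q s ^ 2 :=
    ((hp' s).div (hq' s) (hq0 s)).deriv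
  have emix : deriv (fun t => deriv (fun u => (p u)⁻¹) t * (q t)⁻¹) s
      = ((-(deriv (deriv p) s) * p s ^ 2 - -(deriv p s) * ((2 : ℕ) * p s ^ 1 * deriv p s))
          / (p s ^ 2) ^ 2) * (q s)⁻¹
        + (-(deriv p s) / p s ^ 2) * (-(deriv q s) / q s ^ 2) := by
    rw [einv]
    exact (((hp'' s).neg.div ((hp' s).pow 2) (pow_ne_zero 2 (hp0 s))).mul
      ((hq' s).inv (hq0 s))).deriv
  rw [(hd3' s).deriv, epq, ediv, emix, e2, e1]
  have hps := hp0 s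
  have hqs := hq0 s
  match_scalars <;> push_cast <;> field_simp <;> ring
end

section
/- Let (ξ₂, Y, D) be an alternative frame with ξ₂' = p Y, Y' = -p ξ₂ + q D, D' = -q Y, where p, q are smooth, nowhere zero, and q'p - qp' ≠ 0 everywhere. Set λ₁ = q/(q'p - qp'), λ₂ = (1 + p'λ₁)/p, λ₃ = (p²+q²)λ₁. Then Y satisfies the ODE Y''' + (λ₁' - λ₂)/λ₁ · Y'' + (λ₃ - λ₂')/λ₁ · Y' + (λ₃' - p)/λ₁ · Y = 0. -/
open Real

local notation "E3" => EuclideanSpace ℝ (Fin 3)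

set_option maxHeartbeats 1600000 in
/-- With λ₁ = q/(q'p - qp'), λ₂ = (1 + p'λ₁)/p, λ₃ = (p²+q²)λ₁, the
versor field Y of an alternative frame satisfies
Y''' + (λ₁' - λ₂)/λ₁ · Y'' + (λ₃ - λ₂')/λ₁ · Y' + (λ₃' - p)/λ₁ · Y = 0. -/
theorem Y_third_order_ode
    (ξ₂ Y D : ℝ → E3) (p q : ℝ → ℝ)
    (hξ₂ : ContDiff ℝ (⊤ : ℕ∞) ξ₂) (hY : ContDiff ℝ (⊤ : ℕ∞) Y) (hD : ContDiff ℝ (⊤ : ℕ∞) D)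
    (hp : ContDiff ℝ (⊤ : ℕ∞) p) (hq : ContDiff ℝ (⊤ : ℕ∞) q)
    (hp0 : ∀ s, p s ≠ 0) (hq0 : ∀ s, q s ≠ 0)
    (hn₁ : ∀ s, ‖ξ₂ s‖ = 1) (hn₂ : ∀ s, ‖Y s‖ = 1) (hn₃ : ∀ s, ‖D s‖ = 1)
    (ho₁₂ : ∀ s, (inner ℝ (ξ₂ s) (Y s) : ℝ) = 0)
    (ho₁₃ : ∀ s, (inner ℝ (ξ₂ s) (D s) : ℝ) = 0)
    (ho₂₃ : ∀ s, (inner ℝ (Y s) (D s) : ℝ) = 0)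
    (hd₁ : ∀ s, HasDerivAt ξ₂ (p s • Y s) s)
    (hd₂ : ∀ s, HasDerivAt Y (-(p s) • ξ₂ s + q s • D s) s)
    (hd₃ : ∀ s, HasDerivAt D (-(q s) • Y s) s)
    (hw : ∀ s, deriv q s * p s - q s * deriv p s ≠ 0)
    (lam₁ lam₂ lam₃ : ℝ → ℝ)
    (hl₁ : ∀ s, lam₁ s = q s / (deriv q s * p s - q s * deriv p s))
    (hl₂ : ∀ s, lam₂ s = (1 + deriv p s * lam₁ s) / p s)
    (hl₃ : ∀ s, lam₃ s = ((p s) ^ 2 + (q s) ^ 2) * lam₁ s) :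
    ∀ s, deriv (deriv (deriv Y)) s
      + ((deriv lam₁ s - lam₂ s) / lam₁ s) • deriv (deriv Y) s
      + ((lam₃ s - deriv lam₂ s) / lam₁ s) • deriv Y s
      + ((deriv lam₃ s - p s) / lam₁ s) • Y s = 0 := by
  intro s
  have hdp : ∀ t, HasDerivAt p (deriv p t) t := fun t =>
    (hp.differentiable (by simp) t).hasDerivAt
  have hdq : ∀ t, HasDerivAt q (deriv q t) t := fun t =>
    (hq.differentiable (by simp) t).hasDerivAt
  have hp' : ContDiff ℝ ((⊤ : ℕ∞) : WithTop ℕ∞) (deriv p) := (contDiff_infty_iff_deriv.mp (hp.of_le (by simp))).2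
  have hq' : ContDiff ℝ ((⊤ : ℕ∞) : WithTop ℕ∞) (deriv q) := (contDiff_infty_iff_deriv.mp (hq.of_le (by simp))).2
  have h1i : (1 : WithTop ℕ∞) ≤ ((⊤ : ℕ∞) : WithTop ℕ∞) := by exact_mod_cast le_top
  have hdp' : ∀ t, HasDerivAt (deriv p) (deriv (deriv p) t) t := fun t =>
    (hp'.differentiable (by simp) t).hasDerivAt
  have hdq' : ∀ t, HasDerivAt (deriv q) (deriv (deriv q) t) t := fun t =>
    (hq'.differentiable (by simp) t).hasDerivAt
  -- first derivative of Y
  have hY1 : deriv Y = fun t => -(p t) • ξ₂ t + q t • D t := funext fun t => (hd₂ t).deriv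
  -- second derivative of Y
  have hd2 : ∀ t, HasDerivAt (deriv Y)
      ((-(p t) • (p t • Y t) + -(deriv p t) • ξ₂ t)
        + (q t • (-(q t) • Y t) + deriv q t • D t)) t := by
    intro t
    rw [hY1]
    exact ((hdp t).neg.smul (hd₁ t)).add ((hdq t).smul (hd₃ t))
  have hY2 : deriv (deriv Y) = fun t =>
      (-(p t) • (p t • Y t) + -(deriv p t) • ξ₂ t)
        + (q t • (-(q t) • Y t) + deriv q t • D t) := funext fun t => (hd2 t).deriv
  -- third derivative of Y
  have hd3 : HasDerivAt (deriv (deriv Y))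
      (((-(p s) • (p s • (-(p s) • ξ₂ s + q s • D s) + deriv p s • Y s)
          + -(deriv p s) • (p s • Y s))
        + (-(deriv p s) • (p s • Y s) + -(deriv (deriv p) s) • ξ₂ s))
      + ((q s • (-(q s) • (-(p s) • ξ₂ s + q s • D s) + -(deriv q s) • Y s)
          + deriv q s • (-(q s) • Y s))
        + (deriv q s • (-(q s) • Y s) + deriv (deriv q) s • D s)) ) s := by
    rw [hY2]
    exact (((hdp s).neg.smul ((hdp s).smul (hd₂ s))).add
            ((hdp' s).neg.smul (hd₁ s))).add
          (((hdq s).smul ((hdq s).neg.smul (hd₂ s))).add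
            ((hdq' s).smul (hd₃ s)))
  -- derivatives of the lambdas
  have hlam₁ : lam₁ = fun t => q t / (deriv q t * p t - q t * deriv p t) := funext hl₁
  have hL1 : HasDerivAt lam₁
      ((deriv q s * (deriv q s * p s - q s * deriv p s)
          - q s * ((deriv (deriv q) s * p s + deriv q s * deriv p s)
              - (deriv q s * deriv p s + q s * deriv (deriv p) s)))
        / (deriv q s * p s - q s * deriv p s) ^ 2) s := by
    rw [hlam₁]
    exact (hdq s).div (((hdq' s).mul (hdp s)).sub ((hdq s).mul (hdp' s))) (hw s)
  have hlam₂f : lam₂ = fun t => (1 + deriv p t * lam₁ t) / p t := funext hl₂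
  have hL2 : HasDerivAt lam₂
      (((0 + (deriv (deriv p) s * lam₁ s + deriv p s *
          ((deriv q s * (deriv q s * p s - q s * deriv p s)
            - q s * ((deriv (deriv q) s * p s + deriv q s * deriv p s)
                - (deriv q s * deriv p s + q s * deriv (deriv p) s)))
          / (deriv q s * p s - q s * deriv p s) ^ 2))) * p s
        - (1 + deriv p s * lam₁ s) * deriv p s) / p s ^ 2) s := by
    rw [hlam₂f]
    exact ((hasDerivAt_const s (1:ℝ)).add ((hdp' s).mul hL1)).div (hdp s) (hp0 s)
  have hlam₃f : lam₃ = fun t => ((p t) ^ 2 + (q t) ^ 2) * lam₁ t := funext hl₃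
  have hL3 : HasDerivAt lam₃
      (((2 * p s ^ 1 * deriv p s) + (2 * q s ^ 1 * deriv q s)) * lam₁ s
        + ((p s) ^ 2 + (q s) ^ 2) *
          ((deriv q s * (deriv q s * p s - q s * deriv p s)
            - q s * ((deriv (deriv q) s * p s + deriv q s * deriv p s)
                - (deriv q s * deriv p s + q s * deriv (deriv p) s)))
          / (deriv q s * p s - q s * deriv p s) ^ 2)) s := by
    rw [hlam₃f]
    exact (((hdp s).pow 2).add ((hdq s).pow 2)).mul hL1
  have hP := hp0 s
  have hQ := hq0 s
  have hW := hw s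
  have hW' : p s * deriv q s - q s * deriv p s ≠ 0 := by contrapose! hW; linarith
  have hL1ne : lam₁ s ≠ 0 := by
    rw [hl₁ s]; exact div_ne_zero hQ hW
  -- rewrite the goal
  rw [hd3.deriv, (hd2 s).deriv, (hd₂ s).deriv]
  -- abbreviate the scalars
  have hc₁ : -(deriv (deriv p) s) + p s * (p s ^ 2 + q s ^ 2)
      - ((deriv lam₁ s - lam₂ s) / lam₁ s) * deriv p s
      - ((lam₃ s - deriv lam₂ s) / lam₁ s) * p s = 0 := by
    rw [hL1.deriv, hL2.deriv, hl₃ s, hl₂ s, hl₁ s]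
    field_simp
    ring
  have hc₂ : -(3 * p s * deriv p s) - 3 * q s * deriv q s
      - ((deriv lam₁ s - lam₂ s) / lam₁ s) * (p s ^ 2 + q s ^ 2)
      + (deriv lam₃ s - p s) / lam₁ s = 0 := by
    rw [hL1.deriv, hL3.deriv, hl₂ s, hl₁ s]
    generalize hWg : deriv q s * p s - q s * deriv p s = W at hW ⊢
    field_simp
    rw [← hWg]
    ring
  have hc₃ : deriv (deriv q) s - q s * (p s ^ 2 + q s ^ 2)
      + ((deriv lam₁ s - lam₂ s) / lam₁ s) * deriv q s
      + ((lam₃ s - deriv lam₂ s) / lam₁ s) * q s = 0 := by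
    rw [hL1.deriv, hL2.deriv, hl₃ s, hl₂ s, hl₁ s]
    field_simp
    ring
  have hrhs : (-(deriv (deriv p) s) + p s * (p s ^ 2 + q s ^ 2)
          - ((deriv lam₁ s - lam₂ s) / lam₁ s) * deriv p s
          - ((lam₃ s - deriv lam₂ s) / lam₁ s) * p s) • ξ₂ s
        + (-(3 * p s * deriv p s) - 3 * q s * deriv q s
          - ((deriv lam₁ s - lam₂ s) / lam₁ s) * (p s ^ 2 + q s ^ 2)
          + (deriv lam₃ s - p s) / lam₁ s) • Y s
        + (deriv (deriv q) s - q s * (p s ^ 2 + q s ^ 2)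
          + ((deriv lam₁ s - lam₂ s) / lam₁ s) * deriv q s
          + ((lam₃ s - deriv lam₂ s) / lam₁ s) * q s) • D s = (0 : E3) := by
    rw [hc₁, hc₂, hc₃, zero_smul, zero_smul, zero_smul, add_zero, add_zero]
  rw [← hrhs]
  module
end

section
/- Let (ξ₂, Y, D) be an alternative frame with ξ₂' = p Y, Y' = -p ξ₂ + q D, D' = -q Y, where p, q are smooth and q is nowhere zero. Then the identity (1/q) Y'' + (1/q)' Y' + ((p²+q²)/q) Y + (p/q)' ξ₂ = 0 holds; consequently, p/q is constant if and only if Y'' + q·(1/q)'·Y' + (p²+q²) Y = 0. -/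
open Real

local notation "E3" => EuclideanSpace ℝ (Fin 3)

/-- The identity (1/q)Y'' + (1/q)'Y' + ((p²+q²)/q)Y + (p/q)' ξ₂ = 0 holds,
and p/q is constant iff Y'' + q(1/q)'Y' + (p²+q²)Y = 0. -/
theorem Y_second_order_identity
    (ξ₂ Y D : ℝ → E3) (p q : ℝ → ℝ)
    (hξ₂ : ContDiff ℝ (⊤ : ℕ∞) ξ₂) (hY : ContDiff ℝ (⊤ : ℕ∞) Y) (hD : ContDiff ℝ (⊤ : ℕ∞) D)
    (hp : ContDiff ℝ (⊤ : ℕ∞) p) (hq : ContDiff ℝ (⊤ : ℕ∞) q)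
    (hp0 : ∀ s, p s ≠ 0) (hq0 : ∀ s, q s ≠ 0)
    (hn₁ : ∀ s, ‖ξ₂ s‖ = 1) (hn₂ : ∀ s, ‖Y s‖ = 1) (hn₃ : ∀ s, ‖D s‖ = 1)
    (ho₁₂ : ∀ s, (inner ℝ (ξ₂ s) (Y s) : ℝ) = 0)
    (ho₁₃ : ∀ s, (inner ℝ (ξ₂ s) (D s) : ℝ) = 0)
    (ho₂₃ : ∀ s, (inner ℝ (Y s) (D s) : ℝ) = 0)
    (hd₁ : ∀ s, HasDerivAt ξ₂ (p s • Y s) s)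
    (hd₂ : ∀ s, HasDerivAt Y (-(p s) • ξ₂ s + q s • D s) s)
    (hd₃ : ∀ s, HasDerivAt D (-(q s) • Y s) s) :
    (∀ s, (q s)⁻¹ • deriv (deriv Y) s
        + deriv (fun t => (q t)⁻¹) s • deriv Y s
        + (((p s) ^ 2 + (q s) ^ 2) / q s) • Y s
        + deriv (fun t => p t / q t) s • ξ₂ s = 0) ∧
    ((∃ c : ℝ, ∀ s, p s / q s = c) ↔
      ∀ s, deriv (deriv Y) s
        + (q s * deriv (fun t => (q t)⁻¹) s) • deriv Y s
        + ((p s) ^ 2 + (q s) ^ 2) • Y s = 0) := by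
  have hp' : ∀ s, HasDerivAt p (deriv p s) s := fun s =>
    ((hp.differentiable (by simp)) s).hasDerivAt
  have hq' : ∀ s, HasDerivAt q (deriv q s) s := fun s =>
    ((hq.differentiable (by simp)) s).hasDerivAt
  -- derivative of Y
  have e1 : deriv Y = fun s => -(p s) • ξ₂ s + q s • D s :=
    funext fun s => (hd₂ s).deriv
  -- second derivative of Y
  have e2 : ∀ s, deriv (deriv Y) s =
      ((-(p s)) • (p s • Y s) + (-(deriv p s)) • ξ₂ s)
      + (q s • ((-(q s)) • Y s) + (deriv q s) • D s) := by
    intro s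
    rw [e1]
    exact (((hp' s).neg.smul (hd₁ s)).add ((hq' s).smul (hd₃ s))).deriv
  -- derivative of 1/q
  have e3 : ∀ s, deriv (fun t => (q t)⁻¹) s = -(deriv q s) / (q s) ^ 2 := by
    intro s
    exact ((hq' s).inv (hq0 s)).deriv
  -- derivative of p/q
  have e4 : ∀ s, deriv (fun t => p t / q t) s =
      (deriv p s * q s - p s * deriv q s) / (q s) ^ 2 := by
    intro s
    exact ((hp' s).div (hq' s) (hq0 s)).deriv
  have key : ∀ s, deriv (deriv Y) s
        + (q s * deriv (fun t => (q t)⁻¹) s) • deriv Y s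
        + ((p s) ^ 2 + (q s) ^ 2) • Y s
      = (-(q s * deriv (fun t => p t / q t) s)) • ξ₂ s := by
    intro s
    rw [e2 s, e3 s, e4 s, e1]
    have hq0s := hq0 s
    match_scalars <;> field_simp <;> ring
  constructor
  · intro s
    rw [e2 s, e3 s, e4 s, e1]
    have hq0s := hq0 s
    match_scalars <;> field_simp <;> ring
  · constructor
    · rintro ⟨c, hc⟩ s
      have : (fun t => p t / q t) = fun _ => c := funext hc
      rw [key s, this, deriv_const]
      simp
    · intro h
      have hdiff : Differentiable ℝ (fun t => p t / q t) :=
        (hp.differentiable (by simp)).div (hq.differentiable (by simp)) hq0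
      have hzero : ∀ s, deriv (fun t => p t / q t) s = 0 := by
        intro s
        have := h s
        rw [key s] at this
        have hξne : ξ₂ s ≠ 0 := by
          intro hz
          have := hn₁ s
          rw [hz] at this
          simp at this
        have hsc : -(q s * deriv (fun t => p t / q t) s) = 0 := by
          by_contra hne
          exact hξne (by simpa [hne] using smul_eq_zero.mp this)
        have := neg_eq_zero.mp hsc
        rcases mul_eq_zero.mp this with h1 | h2
        · exact absurd h1 (hq0 s)
        · exact h2
      refine ⟨p 0 / q 0, fun s => ?_⟩
      exact is_const_of_deriv_eq_zero hdiff hzero s 0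
end

section
/- Let (ξ₂, Y, D) be an alternative frame with ξ₂' = p Y, Y' = -p ξ₂ + q D, D' = -q Y, where p, q are smooth and nowhere zero. Then D satisfies the third-order ODE D''' - [(pq)'/(pq) + q'/q] D'' + { pq·[(1/p)·(1/q)']' + p² + q² } D' + pq·(q/p)' D = 0. -/
open Real

local notation "E3" => EuclideanSpace ℝ (Fin 3)

/-- The versor field D of an alternative frame satisfies
D''' - [(pq)'/(pq) + q'/q] D'' + { pq[(1/p)(1/q)']' + p² + q² } D' + pq (q/p)' D = 0. -/
theorem D_third_order_ode
    (ξ₂ Y D : ℝ → E3) (p q : ℝ → ℝ)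
    (hξ₂ : ContDiff ℝ (⊤ : ℕ∞) ξ₂) (hY : ContDiff ℝ (⊤ : ℕ∞) Y) (hD : ContDiff ℝ (⊤ : ℕ∞) D)
    (hp : ContDiff ℝ (⊤ : ℕ∞) p) (hq : ContDiff ℝ (⊤ : ℕ∞) q)
    (hp0 : ∀ s, p s ≠ 0) (hq0 : ∀ s, q s ≠ 0)
    (hn₁ : ∀ s, ‖ξ₂ s‖ = 1) (hn₂ : ∀ s, ‖Y s‖ = 1) (hn₃ : ∀ s, ‖D s‖ = 1)
    (ho₁₂ : ∀ s, (inner ℝ (ξ₂ s) (Y s) : ℝ) = 0)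
    (ho₁₃ : ∀ s, (inner ℝ (ξ₂ s) (D s) : ℝ) = 0)
    (ho₂₃ : ∀ s, (inner ℝ (Y s) (D s) : ℝ) = 0)
    (hd₁ : ∀ s, HasDerivAt ξ₂ (p s • Y s) s)
    (hd₂ : ∀ s, HasDerivAt Y (-(p s) • ξ₂ s + q s • D s) s)
    (hd₃ : ∀ s, HasDerivAt D (-(q s) • Y s) s) :
    ∀ s, deriv (deriv (deriv D)) s
      - (deriv (fun t => p t * q t) s / (p s * q s) + deriv q s / q s) • deriv (deriv D) s
      + (p s * q s * deriv (fun t => (p t)⁻¹ * deriv (fun u => (q u)⁻¹) t) s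
          + (p s) ^ 2 + (q s) ^ 2) • deriv D s
      + (p s * q s * deriv (fun t => q t / p t) s) • D s = 0 := by
  have hp' : ∀ s, HasDerivAt p (deriv p s) s :=
    fun s => (hp.differentiable (by simp) s).hasDerivAt
  have hq' : ∀ s, HasDerivAt q (deriv q s) s :=
    fun s => (hq.differentiable (by simp) s).hasDerivAt
  have hqd := (contDiff_infty_iff_deriv.mp (hq.of_le (by simp))).2
  have hq'' : ∀ s, HasDerivAt (deriv q) (deriv (deriv q) s) s :=
    fun s => (hqd.differentiable (by simp) s).hasDerivAt
  -- first derivative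
  have hD1 : deriv D = fun s => (-(q s)) • Y s := funext fun s => (hd₃ s).deriv
  -- second derivative
  have hD2at : ∀ s, HasDerivAt (deriv D)
      ((p s * q s) • ξ₂ s + (-(deriv q s)) • Y s + (-(q s * q s)) • D s) s := by
    intro s
    rw [hD1]
    have h := ((hq' s).fun_neg).fun_smul (hd₂ s)
    refine h.congr_deriv ?_
    module
  have hD2 : deriv (deriv D) = fun s =>
      (p s * q s) • ξ₂ s + (-(deriv q s)) • Y s + (-(q s * q s)) • D s :=
    funext fun s => (hD2at s).deriv
  -- third derivative
  have hD3at : ∀ s, HasDerivAt (deriv (deriv D))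
      ((deriv p s * q s + p s * deriv q s + p s * deriv q s) • ξ₂ s
        + (p s ^ 2 * q s + q s ^ 3 - deriv (deriv q) s) • Y s
        + (-(3 * q s * deriv q s)) • D s) s := by
    intro s
    rw [hD2]
    have h1 := ((hp' s).fun_mul (hq' s)).fun_smul (hd₁ s)
    have h2 := ((hq'' s).fun_neg).fun_smul (hd₂ s)
    have h3 := (((hq' s).fun_mul (hq' s)).fun_neg).fun_smul (hd₃ s)
    have h := (h1.fun_add h2).fun_add h3
    refine h.congr_deriv ?_
    module
  intro s
  -- scalar derivatives
  have hpq : deriv (fun t => p t * q t) s = deriv p s * q s + p s * deriv q s :=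
    ((hp' s).mul (hq' s)).deriv
  have hqinv : deriv (fun u => (q u)⁻¹) = fun t => -(deriv q t) / q t ^ 2 :=
    funext fun t => ((hq' t).inv (hq0 t)).deriv
  have hmid : deriv (fun t => (p t)⁻¹ * deriv (fun u => (q u)⁻¹) t) s
      = deriv (fun t => (p t)⁻¹ * (-(deriv q t) / q t ^ 2)) s := by
    rw [hqinv]
  have hq2 : HasDerivAt (fun t => q t ^ 2) (2 * q s ^ 1 * deriv q s) s := by
    simpa using (hq' s).fun_pow 2
  have hmid2 := (((hp' s).fun_inv (hp0 s)).fun_mul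
      (((hq'' s).fun_neg).fun_div hq2 (pow_ne_zero 2 (hq0 s))))
  have hqp : deriv (fun t => q t / p t) s
      = (deriv q s * p s - q s * deriv p s) / p s ^ 2 :=
    ((hq' s).div (hp' s) (hp0 s)).deriv
  rw [(hD3at s).deriv, hD2, hD1, hpq, hmid, hmid2.deriv, hqp]
  have hps := hp0 s
  have hqs := hq0 s
  match_scalars <;> field_simp <;> ring
end

section
/- Let ξ₁, ξ₂, ξ₃ be a Frenet-type frame with equations ξ₁' = K₁ ξ₂, ξ₂' = -K₁ ξ₁ + K₂ ξ₃, ξ₃' = -K₂ ξ₂, where K₁, K₂ are smooth and nowhere zero. Then ξ₁ satisfies the third-order ODE ξ₁''' - [(K₁K₂)'/(K₁K₂) + K₁'/K₁] ξ₁'' + { K₁K₂·[(1/K₂)·(1/K₁)']' + K₁² + K₂² } ξ₁' + K₁K₂·(K₁/K₂)' ξ₁ = 0. -/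
open Real

local notation "E3" => EuclideanSpace ℝ (Fin 3)

/-- ξ₁ satisfies
ξ₁''' - [(K₁K₂)'/(K₁K₂) + K₁'/K₁] ξ₁'' + { K₁K₂[(1/K₂)(1/K₁)']' + K₁² + K₂² } ξ₁'
+ K₁K₂ (K₁/K₂)' ξ₁ = 0. -/
theorem xi1_third_order_ode
    (ξ₁ ξ₂ ξ₃ : ℝ → E3) (K₁ K₂ : ℝ → ℝ)
    (hξ₁ : ContDiff ℝ (⊤ : ℕ∞) ξ₁) (hξ₂ : ContDiff ℝ (⊤ : ℕ∞) ξ₂) (hξ₃ : ContDiff ℝ (⊤ : ℕ∞) ξ₃)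
    (hK₁ : ContDiff ℝ (⊤ : ℕ∞) K₁) (hK₂ : ContDiff ℝ (⊤ : ℕ∞) K₂)
    (hK₁0 : ∀ s, K₁ s ≠ 0) (hK₂0 : ∀ s, K₂ s ≠ 0)
    (hn₁ : ∀ s, ‖ξ₁ s‖ = 1) (hn₂ : ∀ s, ‖ξ₂ s‖ = 1) (hn₃ : ∀ s, ‖ξ₃ s‖ = 1)
    (ho₁₂ : ∀ s, (inner ℝ (ξ₁ s) (ξ₂ s) : ℝ) = 0)
    (ho₁₃ : ∀ s, (inner ℝ (ξ₁ s) (ξ₃ s) : ℝ) = 0)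
    (ho₂₃ : ∀ s, (inner ℝ (ξ₂ s) (ξ₃ s) : ℝ) = 0)
    (hd₁ : ∀ s, HasDerivAt ξ₁ (K₁ s • ξ₂ s) s)
    (hd₂ : ∀ s, HasDerivAt ξ₂ (-(K₁ s) • ξ₁ s + K₂ s • ξ₃ s) s)
    (hd₃ : ∀ s, HasDerivAt ξ₃ (-(K₂ s) • ξ₂ s) s) :
    ∀ s, deriv (deriv (deriv ξ₁)) s
      - (deriv (fun t => K₁ t * K₂ t) s / (K₁ s * K₂ s) + deriv K₁ s / K₁ s)
          • deriv (deriv ξ₁) s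
      + (K₁ s * K₂ s * deriv (fun t => (K₂ t)⁻¹ * deriv (fun u => (K₁ u)⁻¹) t) s
          + (K₁ s) ^ 2 + (K₂ s) ^ 2) • deriv ξ₁ s
      + (K₁ s * K₂ s * deriv (fun t => K₁ t / K₂ t) s) • ξ₁ s = 0 := by
  intro s
  have hK₁d : Differentiable ℝ K₁ := hK₁.differentiable (by simp)
  have hK₂d : Differentiable ℝ K₂ := hK₂.differentiable (by simp)
  have hdK₁ : Differentiable ℝ (deriv K₁) :=
    ((contDiff_infty_iff_deriv.mp (hK₁.of_le (by simp))).2).differentiable (by simp)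
  -- first derivative
  have h1 : deriv ξ₁ = fun t => K₁ t • ξ₂ t := funext fun t => (hd₁ t).deriv
  -- second derivative
  have hd2 : ∀ t, HasDerivAt (fun u => K₁ u • ξ₂ u)
      (K₁ t • (-(K₁ t) • ξ₁ t + K₂ t • ξ₃ t) + deriv K₁ t • ξ₂ t) t :=
    fun t => ((hK₁d t).hasDerivAt).smul (hd₂ t)
  have h2 : deriv (deriv ξ₁) = fun t =>
      K₁ t • (-(K₁ t) • ξ₁ t + K₂ t • ξ₃ t) + deriv K₁ t • ξ₂ t := by
    rw [h1]; exact funext fun t => (hd2 t).deriv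
  -- third derivative
  have hd3 : HasDerivAt (fun t => K₁ t • (-(K₁ t) • ξ₁ t + K₂ t • ξ₃ t) + deriv K₁ t • ξ₂ t)
      ((K₁ s • ((-(K₁ s) • (K₁ s • ξ₂ s) + (-(deriv K₁ s)) • ξ₁ s)
          + (K₂ s • (-(K₂ s) • ξ₂ s) + deriv K₂ s • ξ₃ s))
        + deriv K₁ s • (-(K₁ s) • ξ₁ s + K₂ s • ξ₃ s))
        + (deriv K₁ s • (-(K₁ s) • ξ₁ s + K₂ s • ξ₃ s)
          + deriv (deriv K₁) s • ξ₂ s)) s := by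
    have hin : HasDerivAt (fun t => -(K₁ t) • ξ₁ t + K₂ t • ξ₃ t)
        ((-(K₁ s) • (K₁ s • ξ₂ s) + (-(deriv K₁ s)) • ξ₁ s)
          + (K₂ s • (-(K₂ s) • ξ₂ s) + deriv K₂ s • ξ₃ s)) s :=
      (((hK₁d s).hasDerivAt.neg).smul (hd₁ s)).add (((hK₂d s).hasDerivAt).smul (hd₃ s))
    exact (((hK₁d s).hasDerivAt).smul hin).add (((hdK₁ s).hasDerivAt).smul (hd₂ s))
  have h3 : deriv (deriv (deriv ξ₁)) s =
      K₁ s • (-K₁ s • K₁ s • ξ₂ s + -deriv K₁ s • ξ₁ s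
          + (K₂ s • -K₂ s • ξ₂ s + deriv K₂ s • ξ₃ s))
        + deriv K₁ s • (-K₁ s • ξ₁ s + K₂ s • ξ₃ s)
        + (deriv K₁ s • (-K₁ s • ξ₁ s + K₂ s • ξ₃ s) + deriv (deriv K₁) s • ξ₂ s) := by
    rw [h2]; exact hd3.deriv
  -- scalar derivatives
  have ha : K₁ s ≠ 0 := hK₁0 s
  have hb : K₂ s ≠ 0 := hK₂0 s
  have hm : deriv (fun t => K₁ t * K₂ t) s = deriv K₁ s * K₂ s + K₁ s * deriv K₂ s :=
    deriv_mul (hK₁d s) (hK₂d s)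
  have hq : deriv (fun t => K₁ t / K₂ t) s
      = (deriv K₁ s * K₂ s - K₁ s * deriv K₂ s) / (K₂ s) ^ 2 :=
    deriv_div (hK₁d s) (hK₂d s) hb
  have hinv : (fun u => (K₁ u)⁻¹) = fun u => (K₁ u)⁻¹ := rfl
  have hdinv : ∀ t, deriv (fun u => (K₁ u)⁻¹) t = -(deriv K₁ t) / (K₁ t) ^ 2 := by
    intro t
    rw [show (fun u => (K₁ u)⁻¹) = K₁⁻¹ from rfl, deriv_inv'' (hK₁d t) (hK₁0 t)] <;> ring
  have hr : deriv (fun t => (K₂ t)⁻¹ * deriv (fun u => (K₁ u)⁻¹) t) s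
      = deriv (fun t => (K₂ t)⁻¹ * (-(deriv K₁ t) / (K₁ t) ^ 2)) s := by
    congr 1; funext t; rw [hdinv t]
  have hr2 : deriv (fun t => (K₂ t)⁻¹ * (-(deriv K₁ t) / (K₁ t) ^ 2)) s
      = (-(deriv K₂ s) / (K₂ s) ^ 2) * (-(deriv K₁ s) / (K₁ s) ^ 2)
        + (K₂ s)⁻¹ * ((-(deriv (deriv K₁) s) * (K₁ s) ^ 2
            - (-(deriv K₁ s)) * (2 * K₁ s * deriv K₁ s)) / ((K₁ s) ^ 2) ^ 2) := by
    have d1 : HasDerivAt (fun t => (K₂ t)⁻¹) (-(deriv K₂ s) / (K₂ s) ^ 2) s := by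
      have : HasDerivAt (fun t => (K₂ t)⁻¹) _ s := ((hK₂d s).hasDerivAt).inv hb
      convert this using 1 <;> ring
    have d2 : HasDerivAt (fun t => -(deriv K₁ t) / (K₁ t) ^ 2)
        ((-(deriv (deriv K₁) s) * (K₁ s) ^ 2
          - (-(deriv K₁ s)) * (2 * K₁ s * deriv K₁ s)) / ((K₁ s) ^ 2) ^ 2) s := by
      have hnum : HasDerivAt (fun t => -(deriv K₁ t)) (-(deriv (deriv K₁) s)) s :=
        ((hdK₁ s).hasDerivAt).neg
      have hden : HasDerivAt (fun t => (K₁ t) ^ 2) (2 * K₁ s * deriv K₁ s) s := by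
        have : HasDerivAt (fun t => (K₁ t) ^ 2) _ s := ((hK₁d s).hasDerivAt).pow 2
        convert this using 1 <;> ring
      exact hnum.div hden (pow_ne_zero 2 ha)
    have : HasDerivAt (fun t => (K₂ t)⁻¹ * (-(deriv K₁ t) / (K₁ t) ^ 2)) _ s := d1.mul d2
    convert this.deriv using 1 <;> ring
  rw [h3, hm, hq, hr, hr2]
  have e1 : deriv (deriv ξ₁) s = K₁ s • (-(K₁ s) • ξ₁ s + K₂ s • ξ₃ s) + deriv K₁ s • ξ₂ s := by
    rw [h2]
  have e2 : deriv ξ₁ s = K₁ s • ξ₂ s := by rw [h1]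
  rw [e1, e2]
  match_scalars
  · field_simp; ring
  · field_simp; ring
  · field_simp; ring
end

section
/- Let ξ₁, ξ₂, ξ₃ be a Frenet-type frame with ξ₁' = K₁ ξ₂, ξ₂' = -K₁ ξ₁ + K₂ ξ₃, ξ₃' = -K₂ ξ₂, where K₁, K₂ are smooth and nowhere zero. Then K₂/K₁ is constant if and only if ξ₁''' - [(K₁K₂)'/(K₁K₂) + K₁'/K₁] ξ₁'' + { K₁K₂·[(1/K₂)·(1/K₁)']' + K₁² + K₂² } ξ₁' = 0 holds identically. -/
open Real

local notation "E3" => EuclideanSpace ℝ (Fin 3)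

/-- K₂/K₁ is constant (ξ₁-helix) iff
ξ₁''' - [(K₁K₂)'/(K₁K₂) + K₁'/K₁] ξ₁'' + { K₁K₂[(1/K₂)(1/K₁)']' + K₁² + K₂² } ξ₁' = 0. -/
theorem xi1_helix_iff_ode
    (ξ₁ ξ₂ ξ₃ : ℝ → E3) (K₁ K₂ : ℝ → ℝ)
    (hξ₁ : ContDiff ℝ (⊤ : ℕ∞) ξ₁) (hξ₂ : ContDiff ℝ (⊤ : ℕ∞) ξ₂) (hξ₃ : ContDiff ℝ (⊤ : ℕ∞) ξ₃)
    (hK₁ : ContDiff ℝ (⊤ : ℕ∞) K₁) (hK₂ : ContDiff ℝ (⊤ : ℕ∞) K₂)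
    (hK₁0 : ∀ s, K₁ s ≠ 0) (hK₂0 : ∀ s, K₂ s ≠ 0)
    (hn₁ : ∀ s, ‖ξ₁ s‖ = 1) (hn₂ : ∀ s, ‖ξ₂ s‖ = 1) (hn₃ : ∀ s, ‖ξ₃ s‖ = 1)
    (ho₁₂ : ∀ s, (inner ℝ (ξ₁ s) (ξ₂ s) : ℝ) = 0)
    (ho₁₃ : ∀ s, (inner ℝ (ξ₁ s) (ξ₃ s) : ℝ) = 0)
    (ho₂₃ : ∀ s, (inner ℝ (ξ₂ s) (ξ₃ s) : ℝ) = 0)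
    (hd₁ : ∀ s, HasDerivAt ξ₁ (K₁ s • ξ₂ s) s)
    (hd₂ : ∀ s, HasDerivAt ξ₂ (-(K₁ s) • ξ₁ s + K₂ s • ξ₃ s) s)
    (hd₃ : ∀ s, HasDerivAt ξ₃ (-(K₂ s) • ξ₂ s) s) :
    (∃ c : ℝ, ∀ s, K₂ s / K₁ s = c) ↔
    ∀ s, deriv (deriv (deriv ξ₁)) s
      - (deriv (fun t => K₁ t * K₂ t) s / (K₁ s * K₂ s) + deriv K₁ s / K₁ s)
          • deriv (deriv ξ₁) s
      + (K₁ s * K₂ s * deriv (fun t => (K₂ t)⁻¹ * deriv (fun u => (K₁ u)⁻¹) t) s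
          + (K₁ s) ^ 2 + (K₂ s) ^ 2) • deriv ξ₁ s = 0 := by
  have hK₁d : Differentiable ℝ K₁ := hK₁.differentiable (by simp)
  have hK₂d : Differentiable ℝ K₂ := hK₂.differentiable (by simp)
  have hK₁'d : Differentiable ℝ (deriv K₁) :=
    (contDiff_infty_iff_deriv.mp (hK₁.of_le (by simp))).2.differentiable
      (by simp)
  have e1 : deriv ξ₁ = fun s => K₁ s • ξ₂ s := funext fun s => (hd₁ s).deriv
  have hd1' : ∀ s, HasDerivAt (deriv ξ₁)
      (K₁ s • (-(K₁ s) • ξ₁ s + K₂ s • ξ₃ s) + deriv K₁ s • ξ₂ s) s := by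
    intro s; rw [e1]; exact (hK₁d s).hasDerivAt.smul (hd₂ s)
  have e2 : deriv (deriv ξ₁)
      = fun s => K₁ s • (-(K₁ s) • ξ₁ s + K₂ s • ξ₃ s) + deriv K₁ s • ξ₂ s :=
    funext fun s => (hd1' s).deriv
  have hd2' : ∀ s, HasDerivAt (deriv (deriv ξ₁))
      ((K₁ s • ((-(K₁ s) • (K₁ s • ξ₂ s) + -(deriv K₁ s) • ξ₁ s)
            + (K₂ s • (-(K₂ s) • ξ₂ s) + deriv K₂ s • ξ₃ s))
          + deriv K₁ s • (-(K₁ s) • ξ₁ s + K₂ s • ξ₃ s))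
        + (deriv K₁ s • (-(K₁ s) • ξ₁ s + K₂ s • ξ₃ s)
          + deriv (deriv K₁) s • ξ₂ s)) s := by
    intro s; rw [e2]
    exact ((hK₁d s).hasDerivAt.smul
        ((((hK₁d s).hasDerivAt.neg.smul (hd₁ s))).add
          ((hK₂d s).hasDerivAt.smul (hd₃ s)))).add
      ((hK₁'d s).hasDerivAt.smul (hd₂ s))
  have e3 : ∀ s, deriv (deriv (deriv ξ₁)) s
      = (K₁ s • ((-(K₁ s) • (K₁ s • ξ₂ s) + -(deriv K₁ s) • ξ₁ s)
            + (K₂ s • (-(K₂ s) • ξ₂ s) + deriv K₂ s • ξ₃ s))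
          + deriv K₁ s • (-(K₁ s) • ξ₁ s + K₂ s • ξ₃ s))
        + (deriv K₁ s • (-(K₁ s) • ξ₁ s + K₂ s • ξ₃ s)
          + deriv (deriv K₁) s • ξ₂ s) :=
    fun s => (hd2' s).deriv
  have eA : ∀ s, deriv (fun t => K₁ t * K₂ t) s
      = deriv K₁ s * K₂ s + K₁ s * deriv K₂ s :=
    fun s => ((hK₁d s).hasDerivAt.mul (hK₂d s).hasDerivAt).deriv
  have einv : deriv (fun u => (K₁ u)⁻¹) = fun t => -(deriv K₁ t) / K₁ t ^ 2 :=
    funext fun t => ((hK₁d t).hasDerivAt.inv (hK₁0 t)).deriv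
  have eB : ∀ s, deriv (fun t => (K₂ t)⁻¹ * deriv (fun u => (K₁ u)⁻¹) t) s
      = (-(deriv K₂ s) / K₂ s ^ 2) * (-(deriv K₁ s) / K₁ s ^ 2)
        + (K₂ s)⁻¹ * ((-(deriv (deriv K₁) s) * K₁ s ^ 2
            - -(deriv K₁ s) * ((2 : ℕ) * K₁ s ^ 1 * deriv K₁ s)) / (K₁ s ^ 2) ^ 2) := by
    intro s
    have h1 : HasDerivAt (fun t => -(deriv K₁ t) / K₁ t ^ 2)
        ((-(deriv (deriv K₁) s) * K₁ s ^ 2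
          - -(deriv K₁ s) * ((2 : ℕ) * K₁ s ^ 1 * deriv K₁ s)) / (K₁ s ^ 2) ^ 2) s :=
      HasDerivAt.div (hK₁'d s).hasDerivAt.neg ((hK₁d s).hasDerivAt.pow 2)
        (pow_ne_zero 2 (hK₁0 s))
    have h2 := ((hK₂d s).hasDerivAt.inv (hK₂0 s)).mul h1
    rw [show (fun t => (K₂ t)⁻¹ * deriv (fun u => (K₁ u)⁻¹) t)
        = fun t => (K₂ t)⁻¹ * (-(deriv K₁ t) / K₁ t ^ 2) by rw [einv]]
    exact h2.deriv
  have key : ∀ s, deriv (deriv (deriv ξ₁)) s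
      - (deriv (fun t => K₁ t * K₂ t) s / (K₁ s * K₂ s) + deriv K₁ s / K₁ s)
          • deriv (deriv ξ₁) s
      + (K₁ s * K₂ s * deriv (fun t => (K₂ t)⁻¹ * deriv (fun u => (K₁ u)⁻¹) t) s
          + (K₁ s) ^ 2 + (K₂ s) ^ 2) • deriv ξ₁ s
      = (K₁ s * (K₁ s * deriv K₂ s - deriv K₁ s * K₂ s) / K₂ s) • ξ₁ s := by
    intro s
    rw [e3 s, eA s, eB s, (hd1' s).deriv,
      show deriv ξ₁ s = K₁ s • ξ₂ s from (hd₁ s).deriv]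
    have h10 := hK₁0 s
    have h20 := hK₂0 s
    match_scalars <;> field_simp <;> ring
  constructor
  · rintro ⟨c, hc⟩ s
    have hK2 : K₂ = fun t => c * K₁ t := by
      funext t; exact (div_eq_iff (hK₁0 t)).mp (hc t)
    have hK2' : deriv K₂ s = c * deriv K₁ s := by
      rw [hK2]; simp [deriv_const_mul _ (hK₁d s)]
    rw [key s]
    have : K₁ s * (K₁ s * deriv K₂ s - deriv K₁ s * K₂ s) / K₂ s = 0 := by
      rw [hK2', hK2]; ring_nf
    rw [this, zero_smul]
  · intro h
    have hder : ∀ s, deriv (fun t => K₂ t / K₁ t) s = 0 := by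
      intro s
      have hk := key s
      rw [h s] at hk
      have hξ : ξ₁ s ≠ 0 := by
        intro h0; have := hn₁ s; rw [h0, norm_zero] at this; norm_num at this
      have hc0 : K₁ s * (K₁ s * deriv K₂ s - deriv K₁ s * K₂ s) / K₂ s = 0 := by
        rcases smul_eq_zero.mp hk.symm with h' | h'
        · exact h'
        · exact absurd h' hξ
      have hnum : K₁ s * deriv K₂ s - deriv K₁ s * K₂ s = 0 := by
        rcases div_eq_zero_iff.mp hc0 with h' | h'
        · rcases mul_eq_zero.mp h' with h'' | h''
          · exact absurd h'' (hK₁0 s)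
          · exact h''
        · exact absurd h' (hK₂0 s)
      rw [show (fun t => K₂ t / K₁ t) = K₂ / K₁ from rfl, deriv_div (hK₂d s) (hK₁d s) (hK₁0 s)]
      rw [div_eq_zero_iff]
      left; linarith
    refine ⟨K₂ 0 / K₁ 0, fun s => ?_⟩
    exact is_const_of_deriv_eq_zero
      (fun t => (hK₂d t).div (hK₁d t) (hK₁0 t)) hder s 0
end

section
/- Let ξ₁, ξ₂, ξ₃ be a Frenet-type frame with ξ₁' = K₁ ξ₂, ξ₂' = -K₁ ξ₁ + K₂ ξ₃, ξ₃' = -K₂ ξ₂, where K₁, K₂ are smooth and nowhere zero. Then K₂/K₁ is constant if and only if ξ₂'' + K₁·(1/K₁)'·ξ₂' + (K₁²+K₂²) ξ₂ = 0 holds identically. -/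
open Real

local notation "E3" => EuclideanSpace ℝ (Fin 3)

/-- K₂/K₁ is constant iff ξ₂'' + K₁(1/K₁)' ξ₂' + (K₁²+K₂²) ξ₂ = 0. -/
theorem xi1_helix_iff_xi2_ode
    (ξ₁ ξ₂ ξ₃ : ℝ → E3) (K₁ K₂ : ℝ → ℝ)
    (hξ₁ : ContDiff ℝ (⊤ : ℕ∞) ξ₁) (hξ₂ : ContDiff ℝ (⊤ : ℕ∞) ξ₂) (hξ₃ : ContDiff ℝ (⊤ : ℕ∞) ξ₃)
    (hK₁ : ContDiff ℝ (⊤ : ℕ∞) K₁) (hK₂ : ContDiff ℝ (⊤ : ℕ∞) K₂)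
    (hK₁0 : ∀ s, K₁ s ≠ 0) (hK₂0 : ∀ s, K₂ s ≠ 0)
    (hn₁ : ∀ s, ‖ξ₁ s‖ = 1) (hn₂ : ∀ s, ‖ξ₂ s‖ = 1) (hn₃ : ∀ s, ‖ξ₃ s‖ = 1)
    (ho₁₂ : ∀ s, (inner ℝ (ξ₁ s) (ξ₂ s) : ℝ) = 0)
    (ho₁₃ : ∀ s, (inner ℝ (ξ₁ s) (ξ₃ s) : ℝ) = 0)
    (ho₂₃ : ∀ s, (inner ℝ (ξ₂ s) (ξ₃ s) : ℝ) = 0)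
    (hd₁ : ∀ s, HasDerivAt ξ₁ (K₁ s • ξ₂ s) s)
    (hd₂ : ∀ s, HasDerivAt ξ₂ (-(K₁ s) • ξ₁ s + K₂ s • ξ₃ s) s)
    (hd₃ : ∀ s, HasDerivAt ξ₃ (-(K₂ s) • ξ₂ s) s) :
    (∃ c : ℝ, ∀ s, K₂ s / K₁ s = c) ↔
    ∀ s, deriv (deriv ξ₂) s
      + (K₁ s * deriv (fun t => (K₁ t)⁻¹) s) • deriv ξ₂ s
      + ((K₁ s) ^ 2 + (K₂ s) ^ 2) • ξ₂ s = 0 := by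
  have hK₁' : ∀ s, HasDerivAt K₁ (deriv K₁ s) s := fun s =>
    (hK₁.differentiable (by simp) s).hasDerivAt
  have hK₂' : ∀ s, HasDerivAt K₂ (deriv K₂ s) s := fun s =>
    (hK₂.differentiable (by simp) s).hasDerivAt
  have hderiv₂ : deriv ξ₂ = fun s => -(K₁ s) • ξ₁ s + K₂ s • ξ₃ s := by
    funext s; exact (hd₂ s).deriv
  have hdd₂ : ∀ s, deriv (deriv ξ₂) s
      = (-(K₁ s)) • (K₁ s • ξ₂ s) + (-(deriv K₁ s)) • ξ₁ s
        + (K₂ s • (-(K₂ s) • ξ₂ s) + deriv K₂ s • ξ₃ s) := by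
    intro s
    rw [hderiv₂]
    exact (((hK₁' s).neg.smul (hd₁ s)).add ((hK₂' s).smul (hd₃ s))).deriv
  have hinv : ∀ s, deriv (fun t => (K₁ t)⁻¹) s = -(deriv K₁ s) / (K₁ s) ^ 2 := by
    intro s
    exact ((hK₁' s).inv (hK₁0 s)).deriv
  have key : ∀ s, deriv (deriv ξ₂) s
      + (K₁ s * deriv (fun t => (K₁ t)⁻¹) s) • deriv ξ₂ s
      + ((K₁ s) ^ 2 + (K₂ s) ^ 2) • ξ₂ s
      = (deriv K₂ s - deriv K₁ s * (K₂ s / K₁ s)) • ξ₃ s := by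
    intro s
    rw [hdd₂, hinv, hderiv₂]
    have h1 := hK₁0 s
    match_scalars <;> field_simp <;> ring
  constructor
  · rintro ⟨c, hc⟩ s
    rw [key]
    have hK₂eq : K₂ = fun s => c * K₁ s := by
      funext t
      exact (div_eq_iff (hK₁0 t)).mp (hc t)
    have hdK₂ : deriv K₂ s = c * deriv K₁ s := by
      rw [hK₂eq]
      exact (HasDerivAt.const_mul c (hK₁' s)).deriv
    rw [hdK₂, hc s]
    ring_nf
    simp
  · intro h
    refine ⟨K₂ 0 / K₁ 0, ?_⟩
    have hzero : ∀ s, deriv K₂ s - deriv K₁ s * (K₂ s / K₁ s) = 0 := by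
      intro s
      have := h s
      rw [key] at this
      rcases smul_eq_zero.mp this with h' | h'
      · exact h'
      · exact absurd (by rw [h']; simp : ‖ξ₃ s‖ = (0:ℝ)) (by rw [hn₃ s]; norm_num)
    have hdiff : Differentiable ℝ (fun s => K₂ s / K₁ s) := fun s =>
      ((hK₂' s).div (hK₁' s) (hK₁0 s)).differentiableAt
    have hdz : ∀ s, deriv (fun s => K₂ s / K₁ s) s = 0 := by
      intro s
      rw [(show HasDerivAt (fun s => K₂ s / K₁ s) _ s from (hK₂' s).div (hK₁' s) (hK₁0 s)).deriv]
      have h1 := hK₁0 s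
      have h2 := hzero s
      field_simp at h2 ⊢
      linarith [h2]
    intro s
    exact is_const_of_deriv_eq_zero hdiff hdz s 0
end

section
/- Let ξ₁, ξ₂, ξ₃ be a Frenet-type frame with ξ₁' = K₁ ξ₂, ξ₂' = -K₁ ξ₁ + K₂ ξ₃, ξ₃' = -K₂ ξ₂, where K₁, K₂ are smooth and nowhere zero. Then ξ₃ satisfies the third-order ODE ξ₃''' - [(K₁K₂)'/(K₁K₂) + K₂'/K₂] ξ₃'' + { K₁K₂·[(1/K₁)·(1/K₂)']' + K₁² + K₂² } ξ₃' + K₁K₂·(K₂/K₁)' ξ₃ = 0. -/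
open Real

local notation "E3" => EuclideanSpace ℝ (Fin 3)

/-- ξ₃ satisfies
ξ₃''' - [(K₁K₂)'/(K₁K₂) + K₂'/K₂] ξ₃'' + { K₁K₂[(1/K₁)(1/K₂)']' + K₁² + K₂² } ξ₃'
+ K₁K₂ (K₂/K₁)' ξ₃ = 0. -/
theorem xi3_third_order_ode
    (ξ₁ ξ₂ ξ₃ : ℝ → E3) (K₁ K₂ : ℝ → ℝ)
    (hξ₁ : ContDiff ℝ (⊤ : ℕ∞) ξ₁) (hξ₂ : ContDiff ℝ (⊤ : ℕ∞) ξ₂) (hξ₃ : ContDiff ℝ (⊤ : ℕ∞) ξ₃)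
    (hK₁ : ContDiff ℝ (⊤ : ℕ∞) K₁) (hK₂ : ContDiff ℝ (⊤ : ℕ∞) K₂)
    (hK₁0 : ∀ s, K₁ s ≠ 0) (hK₂0 : ∀ s, K₂ s ≠ 0)
    (hn₁ : ∀ s, ‖ξ₁ s‖ = 1) (hn₂ : ∀ s, ‖ξ₂ s‖ = 1) (hn₃ : ∀ s, ‖ξ₃ s‖ = 1)
    (ho₁₂ : ∀ s, (inner ℝ (ξ₁ s) (ξ₂ s) : ℝ) = 0)
    (ho₁₃ : ∀ s, (inner ℝ (ξ₁ s) (ξ₃ s) : ℝ) = 0)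
    (ho₂₃ : ∀ s, (inner ℝ (ξ₂ s) (ξ₃ s) : ℝ) = 0)
    (hd₁ : ∀ s, HasDerivAt ξ₁ (K₁ s • ξ₂ s) s)
    (hd₂ : ∀ s, HasDerivAt ξ₂ (-(K₁ s) • ξ₁ s + K₂ s • ξ₃ s) s)
    (hd₃ : ∀ s, HasDerivAt ξ₃ (-(K₂ s) • ξ₂ s) s) :
    ∀ s, deriv (deriv (deriv ξ₃)) s
      - (deriv (fun t => K₁ t * K₂ t) s / (K₁ s * K₂ s) + deriv K₂ s / K₂ s)
          • deriv (deriv ξ₃) s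
      + (K₁ s * K₂ s * deriv (fun t => (K₁ t)⁻¹ * deriv (fun u => (K₂ u)⁻¹) t) s
          + (K₁ s) ^ 2 + (K₂ s) ^ 2) • deriv ξ₃ s
      + (K₁ s * K₂ s * deriv (fun t => K₂ t / K₁ t) s) • ξ₃ s = 0 := by
  intro s
  have hddK₂ : ∀ t, HasDerivAt (deriv K₂) (deriv (deriv K₂) t) t := by
    intro t
    have h := (contDiff_infty_iff_deriv.mp (hK₂.of_le (by simp))).2
    exact (h.differentiable (by simp) t).hasDerivAt
  have hdK₁ : ∀ t, HasDerivAt K₁ (deriv K₁ t) t := fun t =>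
    (hK₁.differentiable (by simp) t).hasDerivAt
  have hdK₂ : ∀ t, HasDerivAt K₂ (deriv K₂ t) t := fun t =>
    (hK₂.differentiable (by simp) t).hasDerivAt
  -- first derivative of ξ₃
  have e1 : deriv ξ₃ = fun t => -(K₂ t) • ξ₂ t := funext fun t => (hd₃ t).deriv
  -- second derivative
  have d2 : ∀ t, HasDerivAt (deriv ξ₃)
      (-(K₂ t) • (-(K₁ t) • ξ₁ t + K₂ t • ξ₃ t) + -(deriv K₂ t) • ξ₂ t) t := by
    intro t
    rw [e1]
    exact (hdK₂ t).neg.smul (hd₂ t)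
  have e2 : deriv (deriv ξ₃)
      = fun t => -(K₂ t) • (-(K₁ t) • ξ₁ t + K₂ t • ξ₃ t) + -(deriv K₂ t) • ξ₂ t :=
    funext fun t => (d2 t).deriv
  -- third derivative
  have d3 : HasDerivAt (deriv (deriv ξ₃))
      ((-(K₂ s) • ((-(K₁ s) • (K₁ s • ξ₂ s) + -(deriv K₁ s) • ξ₁ s)
          + (K₂ s • (-(K₂ s) • ξ₂ s) + deriv K₂ s • ξ₃ s))
        + -(deriv K₂ s) • (-(K₁ s) • ξ₁ s + K₂ s • ξ₃ s))
       + (-(deriv K₂ s) • (-(K₁ s) • ξ₁ s + K₂ s • ξ₃ s)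
          + -(deriv (deriv K₂) s) • ξ₂ s)) s := by
    rw [e2]
    exact ((hdK₂ s).neg.smul (((hdK₁ s).neg.smul (hd₁ s)).add
      ((hdK₂ s).smul (hd₃ s)))).add ((hddK₂ s).neg.smul (hd₂ s))
  have e3 : deriv (deriv (deriv ξ₃)) s = _ := d3.deriv
  -- scalar derivatives
  have s1 : deriv (fun t => K₁ t * K₂ t) s = deriv K₁ s * K₂ s + K₁ s * deriv K₂ s :=
    ((hdK₁ s).mul (hdK₂ s)).deriv
  have einv : (fun u => deriv (fun v => (K₂ v)⁻¹) u)
      = fun u => -(deriv K₂ u) / (K₂ u) ^ 2 :=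
    funext fun u => by
      exact ((hdK₂ u).inv (hK₂0 u)).deriv
  have s2 : deriv (fun t => (K₁ t)⁻¹ * deriv (fun u => (K₂ u)⁻¹) t) s
      = (-(deriv K₁ s) / (K₁ s) ^ 2) * (-(deriv K₂ s) / (K₂ s) ^ 2)
        + (K₁ s)⁻¹ * ((-(deriv (deriv K₂) s) * (K₂ s) ^ 2
            - -(deriv K₂ s) * (2 * K₂ s * deriv K₂ s)) / ((K₂ s) ^ 2) ^ 2) := by
    have hg : ∀ t, HasDerivAt (fun u => -(deriv K₂ u) / (K₂ u) ^ 2)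
        ((-(deriv (deriv K₂) t) * (K₂ t) ^ 2
          - -(deriv K₂ t) * (2 * K₂ t * deriv K₂ t)) / ((K₂ t) ^ 2) ^ 2) t := by
      intro t
      have h := (hddK₂ t).neg.div ((hdK₂ t).pow 2) (pow_ne_zero 2 (hK₂0 t))
      refine h.congr_deriv ?_
      simp only [Pi.pow_apply, Pi.neg_apply]
      push_cast
      ring
    have hf : HasDerivAt (fun t => (K₁ t)⁻¹) (-(deriv K₁ s) / (K₁ s) ^ 2) s := by
      exact (hdK₁ s).inv (hK₁0 s)
    have := hf.mul (hg s)
    have h2 : (fun t => (K₁ t)⁻¹ * deriv (fun u => (K₂ u)⁻¹) t)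
        = fun t => (K₁ t)⁻¹ * (-(deriv K₂ t) / (K₂ t) ^ 2) := by
      funext t
      rw [congrFun einv t]
    rw [h2]
    exact this.deriv
  have s3 : deriv (fun t => K₂ t / K₁ t) s
      = (deriv K₂ s * K₁ s - K₂ s * deriv K₁ s) / (K₁ s) ^ 2 :=
    ((hdK₂ s).div (hdK₁ s) (hK₁0 s)).deriv
  rw [e3, s1, s2, s3, congrFun e2 s, congrFun e1 s]
  have ha := hK₁0 s
  have hb := hK₂0 s
  match_scalars <;> field_simp <;> ring
end
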